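/- arXiv:1609.06921 — 7 statements merged into one kernel-verified Lean document; each statement's English description precedes it below -/
import Mathlib

section
/- Let R = ⊕_{i=1}^{p} M_{n_i,m_i}(ℂ) and S = ⊕_{j=1}^{q} M_{k_j,l_j}(ℂ) be finite direct sums of rectangular matrix spaces and let φ : R → S be a TRO-morphism (with respect to the componentwise ternary product x y* z). For each j let φ^j : R → M_{k_j,l_j}(ℂ) denote the j-th component of φ. Then there exists a q×p matrix (α_{j,i}) of natural numbers with Σ_{i=1}^{p} α_{j,i} n_i ≤ k_j and Σ_{i=1}^{p} α_{j,i} m_i ≤ l_j for every j, and for every j there exist unitary matrices U_j ∈ M_{k_j}(ℂ) and V_j ∈ M_{l_j}(ℂ) such that φ^j(A_1,…,A_p) = U_j · ((diag_{α_{j,1}}(A_1) ⊕ diag_{α_{j,2}}(A_2) ⊕ ⋯ ⊕ diag_{α_{j,p}}(A_p)) ⊕ 0) · V_j for all (A_1,…,A_p) ∈ R, where the inner expression is the block-diagonal matrix with diagonal blocks diag_{α_{j,i}}(A_i) padded by zeros to size k_j×l_j. -/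
open Matrix

/-- The `N × M` matrix having the block-diagonal matrix `diag_k(A)` (built from `k`
copies of the `n × m` matrix `A`) as a block whose top-left corner sits at row `r`
and column `c`, and zeros elsewhere. -/
noncomputable def diagPadAt {n m : ℕ} (N M r c k : ℕ) (A : Matrix (Fin n) (Fin m) ℂ) :
    Matrix (Fin N) (Fin M) ℂ := Matrix.of fun i j =>
  if h : r ≤ (i : ℕ) ∧ c ≤ (j : ℕ) ∧ ((i : ℕ) - r) % n < n ∧ ((j : ℕ) - c) % m < m ∧
      (i : ℕ) - r < k * n ∧ (j : ℕ) - c < k * m ∧ ((i : ℕ) - r) / n = ((j : ℕ) - c) / m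
  then A ⟨((i : ℕ) - r) % n, h.2.2.1⟩ ⟨((j : ℕ) - c) % m, h.2.2.2.1⟩ else 0

/-!
The images `F r c = φ(E_rc)` of the matrix units of one summand satisfy the ternary relations
of matrix units, and images of different summands are orthogonal: `(F i)ᴴ F j = 0 = F i (F j)ᴴ`.
In one summand `F₀ = F r₀ c₀` is a partial isometry, so `F₀ᴴ F₀ = V Vᴴ` for an isometry
`V : ℂ^α → ℂ^l`; then `W r = F r c₀ V` and `X c = (F r₀ c)ᴴ F₀ V` are isometries with orthogonal
ranges and `F r c = W r (X c)ᴴ`, i.e. `F` is `α` copies of the matrix units. The columns of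
all the `W r` together form an orthonormal family of `∑ α_i n_i` vectors, so `∑ α_i n_i ≤ k`, and
they extend to a unitary `U`; likewise the `X c` give the unitary on the right. Placing the columns at the positions
of the block-diagonal layout turns `F r c = W r (X c)ᴴ` into the normal form on matrix units, and
linearity does the rest.
-/

namespace Matrix

variable {ι κ ρ γ μ ν : Type*}

theorem single_mul_conjTranspose_single_mul_single {R : Type*} [Semiring R] [StarRing R]
    [DecidableEq ρ] [DecidableEq γ] [Fintype ρ] [Fintype γ] (r r' r'' : ρ) (c c' c'' : γ) :
    single r c (1 : R) * (single r' c' (1 : R))ᴴ * single r'' c'' (1 : R) =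
      if c = c' ∧ r' = r'' then single r c'' 1 else 0 := by
  rw [conjTranspose_single, star_one]
  by_cases hc : c = c'
  · subst hc
    by_cases hr : r' = r''
    · subst hr; simp
    · simp [hr]
  · simp [hc]

theorem mul_single_one_mul_conjTranspose_apply {R : Type*} [CommSemiring R] [StarRing R]
    [Fintype μ] [Fintype ν] [DecidableEq μ] [DecidableEq ν] (A : Matrix ρ μ R) (B : Matrix γ ν R)
    (a : μ) (b : ν) (x : ρ) (y : γ) :
    (A * single a b (1 : R) * Bᴴ) x y = A x a * star (B y b) := by
  rw [mul_apply, Finset.sum_eq_single b (fun j _ hj => by simp [hj])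
    (fun h => absurd (Finset.mem_univ b) h)]
  simp

theorem card_le_of_conjTranspose_mul_self_eq_one [Fintype μ] [Fintype ι] [DecidableEq ι]
    {W : Matrix μ ι ℂ} (hW : Wᴴ * W = 1) : Fintype.card ι ≤ Fintype.card μ := by
  calc Fintype.card ι = (Wᴴ * W).rank := by rw [hW, rank_one]
    _ ≤ W.rank := rank_mul_le_right _ _
    _ ≤ Fintype.card μ := rank_le_card_height W

theorem exists_mem_unitaryGroup_submatrix_eq [Fintype μ] [DecidableEq μ] [Fintype ι]
    [DecidableEq ι] {e : ι → μ} (he : Function.Injective e) {W : Matrix μ ι ℂ}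
    (hW : Wᴴ * W = 1) : ∃ U ∈ unitaryGroup μ ℂ, U.submatrix id e = W := by
  let col : ι → EuclideanSpace ℂ μ := fun σ => WithLp.toLp 2 fun x => W x σ
  have hcol : Orthonormal ℂ col := by
    rw [orthonormal_iff_ite]
    intro σ τ
    rw [EuclideanSpace.inner_toLp_toLp, ← one_apply, ← hW, mul_apply, dotProduct]
    simp [mul_comm]
  let v : μ → EuclideanSpace ℂ μ := Function.extend e col 0
  have hv : (Set.range e).domRestrict v = col ∘ (Equiv.ofInjective e he).symm := by
    funext a
    rw [Set.domRestrict_apply, Function.comp_apply, ← Equiv.apply_ofInjective_symm he a]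
    exact he.extend_apply col 0 _
  have hvo : Orthonormal ℂ ((Set.range e).domRestrict v) := by
    rw [hv]; exact hcol.comp _ (Equiv.injective _)
  obtain ⟨b, hb⟩ := hvo.exists_orthonormalBasis_extension_of_card_eq (ι := μ)
    finrank_euclideanSpace
  refine ⟨(EuclideanSpace.basisFun μ ℂ).toBasis.toMatrix b,
    OrthonormalBasis.toMatrix_orthonormalBasis_mem_unitary _ _, ?_⟩
  ext x σ
  rw [submatrix_apply, Module.Basis.toMatrix_apply, OrthonormalBasis.coe_toBasis_repr_apply,
    EuclideanSpace.basisFun_repr, hb (e σ) ⟨σ, rfl⟩]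
  simp only [v, he.extend_apply]
  rfl

theorem IsHermitian.exists_isometry_mul_conjTranspose_eq [Fintype ν] [DecidableEq ν]
    {P : Matrix ν ν ℂ} (hP : P.IsHermitian) (hPP : IsIdempotentElem P) :
    ∃ (α : ℕ) (V : Matrix ν (Fin α) ℂ), Vᴴ * V = 1 ∧ V * Vᴴ = P := by
  set U : Matrix ν ν ℂ := (hP.eigenvectorUnitary : Matrix ν ν ℂ)
  set d : ν → ℂ := RCLike.ofReal ∘ hP.eigenvalues
  have hUU : star U * U = 1 := Unitary.coe_star_mul_self _
  have hUU' : U * star U = 1 := Unitary.coe_mul_star_self _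
  have hspec : P = U * diagonal d * star U := by
    conv_lhs => rw [hP.spectral_theorem, Unitary.conjStarAlgAut_apply]
  have hd : ∀ c, d c = 0 ∨ d c = 1 := by
    have hD : diagonal d = star U * P * U := by
      rw [hspec, ← mul_assoc, ← mul_assoc, hUU, one_mul, mul_assoc, hUU, mul_one]
    have hDD : diagonal d * diagonal d = diagonal d := by
      rw [hD, show star U * P * U * (star U * P * U) = star U * (P * (U * star U) * P) * U by
        simp only [mul_assoc], hUU', mul_one, hPP.eq]
    intro c
    have hc := congrFun (congrFun hDD c) c
    rw [diagonal_mul_diagonal, diagonal_apply_eq, diagonal_apply_eq] at hc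
    exact IsIdempotentElem.iff_eq_zero_or_one.mp hc
  set S := Finset.univ.filter fun c => d c = 1
  let e : Fin S.card → ν := fun t => S.equivFin.symm t
  have he : Function.Injective e := Subtype.val_injective.comp S.equivFin.symm.injective
  refine ⟨S.card, U.submatrix id e, ?_, ?_⟩
  · rw [conjTranspose_submatrix, ← submatrix_mul _ _ _ _ _ Function.bijective_id,
      ← star_eq_conjTranspose, hUU, submatrix_one _ he]
  · ext x y
    have hsum : ∀ f : ν → ℂ, ∑ t, f (e t) = ∑ c, d c * f c := by
      intro f
      rw [Equiv.sum_comp S.equivFin.symm (fun c : S => f c), Finset.sum_coe_sort S f,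
        Finset.sum_filter]
      refine Finset.sum_congr rfl fun c _ => ?_
      rcases hd c with h | h <;> simp [h]
    rw [hspec, mul_apply, mul_apply]
    simp only [submatrix_apply, id, conjTranspose_apply, mul_diagonal, star_apply]
    rw [hsum fun c => U x c * star (U y c)]
    exact Finset.sum_congr rfl fun c _ => by ring

def blockCols {α : κ → ℕ} {ρ : κ → Type*} (W : ∀ k, ρ k → Matrix μ (Fin (α k)) ℂ) :
    Matrix μ (Σ k, Fin (α k) × ρ k) ℂ :=
  of fun x σ => W σ.1 σ.2.2 x σ.2.1

theorem conjTranspose_blockCols_mul_self [Fintype μ] [DecidableEq κ] {α : κ → ℕ}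
    {ρ : κ → Type*} [∀ k, DecidableEq (ρ k)] {W : ∀ k, ρ k → Matrix μ (Fin (α k)) ℂ}
    (hsame : ∀ k r r', (W k r)ᴴ * W k r' = if r = r' then 1 else 0)
    (hcross : ∀ k k', k ≠ k' → ∀ r r', (W k r)ᴴ * W k' r' = 0) :
    (blockCols W)ᴴ * blockCols W = 1 := by
  ext ⟨k, t, r⟩ ⟨k', t', r'⟩
  have hentry : ((blockCols W)ᴴ * blockCols W) ⟨k, t, r⟩ ⟨k', t', r'⟩ =
      ((W k r)ᴴ * W k' r') t t' := by
    simp [blockCols, mul_apply]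
  rw [hentry]
  by_cases hk : k = k'
  · subst hk
    rw [hsame]
    by_cases hr : r = r' <;> simp [hr, one_apply]
  · rw [hcross k k' hk, zero_apply, one_apply_ne (fun h => hk (Sigma.mk.inj_iff.mp h).1)]

end Matrix

section MatrixUnits

variable {ρ γ μ ν : Type*} [Fintype μ] [Fintype ν] [DecidableEq ρ] [DecidableEq γ]

def IsTernaryMatrixUnits (F : ρ → γ → Matrix μ ν ℂ) : Prop :=
  ∀ r c r' c' r'' c'', F r c * (F r' c')ᴴ * F r'' c'' = if c = c' ∧ r' = r'' then F r c'' else 0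

/-- Up to isometries on both sides, `F` is the ampliation `r c ↦ 1_α ⊗ E_rc` of the matrix units.
Without the last field, a block with no rows or no columns could carry arbitrary isometries. -/
structure IsAmpliation {α : ℕ} (F : ρ → γ → Matrix μ ν ℂ) (W : ρ → Matrix μ (Fin α) ℂ)
    (X : γ → Matrix ν (Fin α) ℂ) : Prop where
  left_orthonormal : ∀ r r', (W r)ᴴ * W r' = if r = r' then 1 else 0
  right_orthonormal : ∀ c c', (X c)ᴴ * X c' = if c = c' then 1 else 0
  eq_mul_conjTranspose : ∀ r c, F r c = W r * (X c)ᴴ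
  nonempty_of_pos : 0 < α → Nonempty ρ ∧ Nonempty γ

namespace IsAmpliation

variable {α α' : ℕ} {F : ρ → γ → Matrix μ ν ℂ} {W : ρ → Matrix μ (Fin α) ℂ}
  {X : γ → Matrix ν (Fin α) ℂ}

theorem conjTranspose (h : IsAmpliation F W X) : IsAmpliation (fun c r => (F r c)ᴴ) X W where
  left_orthonormal := h.right_orthonormal
  right_orthonormal := h.left_orthonormal
  eq_mul_conjTranspose r c := by
    rw [h.eq_mul_conjTranspose, conjTranspose_mul, conjTranspose_conjTranspose]
  nonempty_of_pos hα := (h.nonempty_of_pos hα).symm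

theorem mul_eq (h : IsAmpliation F W X) (r : ρ) (c : γ) : F r c * X c = W r := by
  rw [h.eq_mul_conjTranspose, Matrix.mul_assoc, h.right_orthonormal, if_pos rfl, Matrix.mul_one]

theorem conjTranspose_mul_eq_zero {ρ' γ' : Type*} [DecidableEq ρ'] [DecidableEq γ']
    {F' : ρ' → γ' → Matrix μ ν ℂ} {W' : ρ' → Matrix μ (Fin α') ℂ}
    {X' : γ' → Matrix ν (Fin α') ℂ}
    (h : IsAmpliation F W X) (h' : IsAmpliation F' W' X')
    (hF : ∀ r c r' c', (F r c)ᴴ * F' r' c' = 0) (r : ρ) (r' : ρ') : (W r)ᴴ * W' r' = 0 := by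
  rcases Nat.eq_zero_or_pos α with hα | hα
  · subst hα; exact Subsingleton.elim _ _
  rcases Nat.eq_zero_or_pos α' with hα' | hα'
  · subst hα'; exact Subsingleton.elim _ _
  obtain ⟨-, ⟨c⟩⟩ := h.nonempty_of_pos hα
  obtain ⟨-, ⟨c'⟩⟩ := h'.nonempty_of_pos hα'
  rw [← h.mul_eq r c, ← h'.mul_eq r' c', conjTranspose_mul, Matrix.mul_assoc,
    ← Matrix.mul_assoc (F r c)ᴴ, hF, Matrix.zero_mul, Matrix.mul_zero]

end IsAmpliation

theorem IsTernaryMatrixUnits.exists_isAmpliation [DecidableEq ν] {F : ρ → γ → Matrix μ ν ℂ}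
    (hF : IsTernaryMatrixUnits F) :
    ∃ (α : ℕ) (W : ρ → Matrix μ (Fin α) ℂ) (X : γ → Matrix ν (Fin α) ℂ),
      IsAmpliation F W X := by
  by_cases hne : Nonempty ρ ∧ Nonempty γ
  swap
  · exact ⟨0, fun _ => 0, fun _ => 0, fun _ _ => Subsingleton.elim _ _,
      fun _ _ => Subsingleton.elim _ _, fun r c => absurd ⟨⟨r⟩, ⟨c⟩⟩ hne,
      fun h => absurd h (lt_irrefl 0)⟩
  obtain ⟨⟨r₀⟩, ⟨c₀⟩⟩ := hne
  set F₀ := F r₀ c₀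
  have hF₀ : F₀ * F₀ᴴ * F₀ = F₀ := by simpa using hF r₀ c₀ r₀ c₀ r₀ c₀
  obtain ⟨α, V, hVV, hVP⟩ :=
    (isHermitian_conjTranspose_mul_self F₀).exists_isometry_mul_conjTranspose_eq
      (by rw [IsIdempotentElem, Matrix.mul_assoc, ← Matrix.mul_assoc F₀, hF₀])
  have hPV : F₀ᴴ * F₀ * V = V := by rw [← hVP, Matrix.mul_assoc, hVV, Matrix.mul_one]
  have hVPV : Vᴴ * (F₀ᴴ * F₀) * V = 1 := by rw [Matrix.mul_assoc, hPV, hVV]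
  refine ⟨α, fun r => F r c₀ * V, fun c => (F r₀ c)ᴴ * F₀ * V, ⟨fun r r' => ?_, fun c c' => ?_,
    fun r c => ?_, fun _ => ⟨⟨r₀⟩, ⟨c₀⟩⟩⟩⟩
  · have key : (F r c₀)ᴴ * F r' c₀ * (F₀ᴴ * F₀) = if r = r' then F₀ᴴ * F₀ else 0 := by
      calc _ = (F₀ * (F r' c₀)ᴴ * F r c₀)ᴴ * F₀ := by
            simp only [conjTranspose_mul, conjTranspose_conjTranspose, Matrix.mul_assoc]
        _ = _ := by rw [hF]; by_cases h : r = r' <;> simp [h, eq_comm, F₀]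
    calc (F r c₀ * V)ᴴ * (F r' c₀ * V) = Vᴴ * ((F r c₀)ᴴ * F r' c₀ * (F₀ᴴ * F₀)) * V := by
          nth_rewrite 2 [← hPV]; simp only [conjTranspose_mul, Matrix.mul_assoc]
      _ = _ := by rw [key]; split_ifs <;> simp [hVPV]
  · calc ((F r₀ c)ᴴ * F₀ * V)ᴴ * ((F r₀ c')ᴴ * F₀ * V) =
          Vᴴ * F₀ᴴ * (F r₀ c * (F r₀ c')ᴴ * F₀) * V := by
          simp only [conjTranspose_mul, conjTranspose_conjTranspose, Matrix.mul_assoc]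
      _ = _ := by rw [hF]; split_ifs with h <;> simp_all [Matrix.mul_assoc, F₀]
  · have h₁ := hF r c₀ r₀ c₀ r₀ c
    have h₂ := hF r₀ c₀ r₀ c₀ r₀ c
    simp only [and_self, if_true] at h₁ h₂
    calc F r c = F r c₀ * F₀ᴴ * (F₀ * F₀ᴴ * F r₀ c) := by rw [h₂, h₁]
      _ = F r c₀ * V * ((F r₀ c)ᴴ * F₀ * V)ᴴ := by
          simp only [conjTranspose_mul, conjTranspose_conjTranspose, ← Matrix.mul_assoc]
          rw [Matrix.mul_assoc (F r c₀) V, hVP]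
          simp only [Matrix.mul_assoc]

end MatrixUnits

section TernaryMorphism

variable {ι : Type*} [DecidableEq ι] {ρ γ : ι → Type*} {μ ν : Type*}

theorem Pi.single_mul_conjTranspose_single_mul_single [∀ i, Fintype (γ i)] [∀ i, Fintype (ρ i)]
    (i : ι) (x y z : Matrix (ρ i) (γ i) ℂ) :
    (fun k => (Pi.single i x : ∀ k, Matrix (ρ k) (γ k) ℂ) k *
      ((Pi.single i y : ∀ k, Matrix (ρ k) (γ k) ℂ) k)ᴴ *
      (Pi.single i z : ∀ k, Matrix (ρ k) (γ k) ℂ) k) = Pi.single i (x * yᴴ * z) := by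
  funext k
  by_cases hk : k = i
  · subst hk; simp
  · simp [Pi.single_eq_of_ne hk]

theorem Pi.single_mul_conjTranspose_single_mul_single_of_ne [∀ i, Fintype (γ i)]
    [∀ i, Fintype (ρ i)] {i j l : ι} (h : i ≠ j ∨ j ≠ l) (x : Matrix (ρ i) (γ i) ℂ)
    (y : Matrix (ρ j) (γ j) ℂ) (z : Matrix (ρ l) (γ l) ℂ) :
    (fun k => (Pi.single i x : ∀ k, Matrix (ρ k) (γ k) ℂ) k *
      ((Pi.single j y : ∀ k, Matrix (ρ k) (γ k) ℂ) k)ᴴ *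
      (Pi.single l z : ∀ k, Matrix (ρ k) (γ k) ℂ) k) = 0 := by
  funext k
  by_cases hk : k = j
  · subst hk
    rcases h with h | h
    · simp [Pi.single_eq_of_ne' h]
    · simp [Pi.single_eq_of_ne h]
  · simp [Pi.single_eq_of_ne hk]

variable [∀ i, Fintype (ρ i)] [∀ i, Fintype (γ i)] [Fintype μ] [Fintype ν]
  {ψ : (∀ i, Matrix (ρ i) (γ i) ℂ) →ₗ[ℂ] Matrix μ ν ℂ}

theorem isTernaryMatrixUnits_of_tro [∀ i, DecidableEq (ρ i)] [∀ i, DecidableEq (γ i)]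
    (hψ : ∀ x y z, ψ (fun i => x i * (y i)ᴴ * z i) = ψ x * (ψ y)ᴴ * ψ z) (i : ι) :
    IsTernaryMatrixUnits fun (r : ρ i) (c : γ i) => ψ (Pi.single i (single r c 1)) := by
  intro r c r' c' r'' c''
  rw [← hψ, Pi.single_mul_conjTranspose_single_mul_single,
    single_mul_conjTranspose_single_mul_single]
  split_ifs <;> simp

open scoped ComplexOrder in
theorem tro_conjTranspose_mul_eq_zero
    (hψ : ∀ x y z, ψ (fun i => x i * (y i)ᴴ * z i) = ψ x * (ψ y)ᴴ * ψ z) {i j : ι} (hij : i ≠ j)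
    (x : Matrix (ρ i) (γ i) ℂ) (y : Matrix (ρ j) (γ j) ℂ) :
    (ψ (Pi.single i x))ᴴ * ψ (Pi.single j y) = 0 := by
  rw [← self_mul_conjTranspose_mul_eq_zero, ← hψ,
    Pi.single_mul_conjTranspose_single_mul_single_of_ne (Or.inr hij), map_zero]

open scoped ComplexOrder in
theorem tro_mul_conjTranspose_eq_zero
    (hψ : ∀ x y z, ψ (fun i => x i * (y i)ᴴ * z i) = ψ x * (ψ y)ᴴ * ψ z) {i j : ι} (hij : i ≠ j)
    (x : Matrix (ρ i) (γ i) ℂ) (y : Matrix (ρ j) (γ j) ℂ) :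
    ψ (Pi.single i x) * (ψ (Pi.single j y))ᴴ = 0 := by
  rw [← mul_conjTranspose_mul_self_eq_zero, ← Matrix.mul_assoc, ← hψ,
    Pi.single_mul_conjTranspose_single_mul_single_of_ne (Or.inl hij), map_zero]

end TernaryMorphism

theorem Fin.sum_univ_castLE_eq_sum_Iio {p : ℕ} (g : Fin p → ℕ) (i : Fin p) :
    ∑ i' : Fin i, g (Fin.castLE i.is_lt.le i') = ∑ i' ∈ Finset.Iio i, g i' := by
  have hIio : Finset.univ.map (Fin.castLEEmb i.is_lt.le) = Finset.Iio i := by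
    ext i'
    simp only [Finset.mem_map, Finset.mem_univ, true_and, Fin.castLEEmb_apply, Finset.mem_Iio]
    exact ⟨fun ⟨j, hj⟩ => hj ▸ Fin.mk_lt_mk.mpr j.is_lt, fun h => ⟨⟨i', h⟩, rfl⟩⟩
  rw [← hIio, Finset.sum_map]
  rfl

/-- Position of row `r` of the `t`-th copy of the `i`-th block in the layout of `diagPadAt`. -/
def blockPos {p N : ℕ} (α d : Fin p → ℕ) (h : ∑ i, α i * d i ≤ N) :
    (Σ i, Fin (α i) × Fin (d i)) → Fin N :=
  Fin.castLE h ∘ ((Equiv.sigmaCongrRight fun _ => finProdFinEquiv).trans finSigmaFinEquiv)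

theorem blockPos_injective {p N : ℕ} (α d : Fin p → ℕ) (h : ∑ i, α i * d i ≤ N) :
    Function.Injective (blockPos α d h) :=
  (Fin.castLE_injective h).comp (Equiv.injective _)

theorem blockPos_val {p N : ℕ} (α d : Fin p → ℕ) (h : ∑ i, α i * d i ≤ N) (i : Fin p)
    (t : Fin (α i)) (r : Fin (d i)) :
    (blockPos α d h ⟨i, t, r⟩ : ℕ) = ∑ i' ∈ Finset.Iio i, α i' * d i' + (r + d i * t) := by
  simp [blockPos, finSigmaFinEquiv_apply, finProdFinEquiv,
    Fin.sum_univ_castLE_eq_sum_Iio (fun i => α i * d i)]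

theorem Nat.add_add_mul_eq_iff {R a n r t : ℕ} (hr : r < n) :
    R + (r + n * t) = a ↔ R ≤ a ∧ (a - R) / n = t ∧ (a - R) % n = r := by
  have hn : 0 < n := Nat.zero_lt_of_lt hr
  constructor
  · rintro rfl
    exact ⟨Nat.le_add_right _ _, (Nat.div_mod_unique hn).mpr ⟨by omega, hr⟩⟩
  · rintro ⟨ha, h⟩
    have := ((Nat.div_mod_unique hn).mp h).1
    omega

theorem diagPadAt_single {n m N M R C α : ℕ} (r : Fin n) (c : Fin m) {e : Fin α → Fin N}
    {f : Fin α → Fin M} (he : ∀ t, (e t : ℕ) = R + (r + n * t))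
    (hf : ∀ t, (f t : ℕ) = C + (c + m * t)) :
    diagPadAt N M R C α (single r c (1 : ℂ)) = ∑ t, single (e t) (f t) 1 := by
  have hn : 0 < n := r.pos
  have hm : 0 < m := c.pos
  ext a b
  simp only [diagPadAt, of_apply, Matrix.sum_apply, single_apply, Fin.ext_iff, he, hf,
    Nat.add_add_mul_eq_iff r.isLt, Nat.add_add_mul_eq_iff c.isLt]
  split
  next h =>
    have ht : (a - R) / n < α := (Nat.div_lt_iff_lt_mul hn).mpr h.2.2.2.2.1
    rw [Finset.sum_eq_single ⟨_, ht⟩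
      (fun t _ ht' => if_neg fun h' => ht' (Fin.ext h'.1.2.1.symm)) (by simp)]
    obtain ⟨ha, hb, -, -, -, -, hdiv⟩ := h
    exact if_congr ⟨fun ⟨h1, h2⟩ => ⟨⟨ha, rfl, h1.symm⟩, ⟨hb, hdiv.symm, h2.symm⟩⟩,
      fun ⟨⟨_, _, h1⟩, ⟨_, _, h2⟩⟩ => ⟨h1.symm, h2.symm⟩⟩ rfl rfl
  next h =>
    refine (Finset.sum_eq_zero fun t _ => if_neg fun h' => h ?_).symm
    obtain ⟨⟨ha, h1, -⟩, ⟨hb, h2, -⟩⟩ := h'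
    refine ⟨ha, hb, Nat.mod_lt _ hn, Nat.mod_lt _ hm, ?_, ?_, h1.trans h2.symm⟩
    · exact (Nat.div_lt_iff_lt_mul hn).mp (h1 ▸ t.isLt)
    · exact (Nat.div_lt_iff_lt_mul hm).mp (h2 ▸ t.isLt)

noncomputable def diagPadAtLinearMap {n m : ℕ} (N M r c k : ℕ) :
    Matrix (Fin n) (Fin m) ℂ →ₗ[ℂ] Matrix (Fin N) (Fin M) ℂ where
  toFun := diagPadAt N M r c k
  map_add' A B := by
    ext
    simp only [diagPadAt, of_apply, Matrix.add_apply]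
    split_ifs <;> simp
  map_smul' z A := by
    ext
    simp only [diagPadAt, of_apply, Matrix.smul_apply, smul_eq_mul, RingHom.id_apply]
    split_ifs <;> simp

theorem exists_unitary_apply_blockPos {p N : ℕ} {α d : Fin p → ℕ}
    {W : ∀ i, Fin (d i) → Matrix (Fin N) (Fin (α i)) ℂ} (hW : (blockCols W)ᴴ * blockCols W = 1) :
    ∃ h : ∑ i, α i * d i ≤ N, ∃ U ∈ unitaryGroup (Fin N) ℂ,
      ∀ x σ, U x (blockPos α d h σ) = W σ.1 σ.2.2 x σ.2.1 := by
  have h : ∑ i, α i * d i ≤ N := by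
    simpa [Fintype.card_sigma] using card_le_of_conjTranspose_mul_self_eq_one hW
  obtain ⟨U, hU, hUW⟩ := exists_mem_unitaryGroup_submatrix_eq (blockPos_injective α d h) hW
  exact ⟨h, U, hU, fun x σ => congrFun (congrFun hUW x) σ⟩

theorem eq_mul_sum_diagPadAt_mul_of_single {p K L : ℕ} {n m : Fin p → ℕ}
    {ψ : (∀ i, Matrix (Fin (n i)) (Fin (m i)) ℂ) →ₗ[ℂ] Matrix (Fin K) (Fin L) ℂ}
    {U : Matrix (Fin K) (Fin K) ℂ} {V : Matrix (Fin L) (Fin L) ℂ} {R C α : Fin p → ℕ}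
    (h : ∀ i r c, ψ (Pi.single i (single r c 1)) =
      U * diagPadAt K L (R i) (C i) (α i) (single r c 1) * V)
    (A : ∀ i, Matrix (Fin (n i)) (Fin (m i)) ℂ) :
    ψ A = U * (∑ i, diagPadAt K L (R i) (C i) (α i) (A i)) * V := by
  have hψ : ψ = (mulRightLinearMap (Fin K) ℂ V ∘ₗ mulLeftLinearMap (Fin L) ℂ U) ∘ₗ
      ∑ i, diagPadAtLinearMap K L (R i) (C i) (α i) ∘ₗ LinearMap.proj i := by
    refine LinearMap.pi_ext' fun i => Matrix.ext_linearMap ℂ fun r c => LinearMap.ext_ring ?_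
    simp only [LinearMap.coe_comp, Function.comp_apply, singleLinearMap_apply,
      LinearMap.coe_single, LinearMap.coe_sum, Finset.sum_apply, LinearMap.proj_apply,
      mulLeftLinearMap_apply, mulRightLinearMap_apply, h]
    rw [Fintype.sum_eq_single i fun j hj => by rw [Pi.single_eq_of_ne hj, map_zero],
      Pi.single_eq_same]
    rfl
  rw [hψ]
  simp [diagPadAtLinearMap, Matrix.mul_sum, Matrix.sum_mul]

theorem tro_component_standard_form {p K L : ℕ} {n m : Fin p → ℕ}
    {ψ : (∀ i, Matrix (Fin (n i)) (Fin (m i)) ℂ) →ₗ[ℂ] Matrix (Fin K) (Fin L) ℂ}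
    (hψ : ∀ x y z, ψ (fun i => x i * (y i)ᴴ * z i) = ψ x * (ψ y)ᴴ * ψ z) :
    ∃ α : Fin p → ℕ, ((∑ i, α i * n i) ≤ K ∧ (∑ i, α i * m i) ≤ L) ∧
      ∃ U ∈ unitaryGroup (Fin K) ℂ, ∃ V ∈ unitaryGroup (Fin L) ℂ,
        ∀ A, ψ A = U * (∑ i, diagPadAt K L (∑ i' ∈ Finset.Iio i, α i' * n i')
          (∑ i' ∈ Finset.Iio i, α i' * m i') (α i) (A i)) * V := by
  choose α W X hWX using fun i => (isTernaryMatrixUnits_of_tro hψ i).exists_isAmpliation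
  obtain ⟨hK, U, hU, hUW⟩ := exists_unitary_apply_blockPos (W := W) <|
    conjTranspose_blockCols_mul_self (fun i => (hWX i).left_orthonormal) fun i j hij =>
      (hWX i).conjTranspose_mul_eq_zero (hWX j) fun _ _ _ _ =>
        tro_conjTranspose_mul_eq_zero hψ hij _ _
  obtain ⟨hL, V, hV, hVX⟩ := exists_unitary_apply_blockPos (W := X) <|
    conjTranspose_blockCols_mul_self (fun i => (hWX i).right_orthonormal) fun i j hij =>
      (hWX i).conjTranspose.conjTranspose_mul_eq_zero (hWX j).conjTranspose fun _ _ _ _ => by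
        simpa using tro_mul_conjTranspose_eq_zero hψ hij _ _
  refine ⟨α, ⟨hK, hL⟩, U, hU, Vᴴ, star_eq_conjTranspose V ▸ Unitary.star_mem hV,
    eq_mul_sum_diagPadAt_mul_of_single fun i r c => ?_⟩
  rw [(hWX i).eq_mul_conjTranspose r c, diagPadAt_single r c (blockPos_val α n hK i · r)
    (blockPos_val α m hL i · c), Matrix.mul_sum, Matrix.sum_mul]
  ext x y
  rw [Matrix.sum_apply, mul_apply]
  refine Finset.sum_congr rfl fun t _ => ?_
  rw [mul_single_one_mul_conjTranspose_apply, conjTranspose_apply, hUW, hVX]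

/-- every TRO-morphism between finite direct sums of rectangular matrix
spaces is, componentwise and up to unitaries, determined by a multiplicity matrix of
natural numbers, acting as a padded block-diagonal embedding. -/
theorem tro_morphism_direct_sum_standard_form (p q : ℕ)
    (n m : Fin p → ℕ) (k l : Fin q → ℕ)
    (φ : (∀ i, Matrix (Fin (n i)) (Fin (m i)) ℂ) →ₗ[ℂ]
          (∀ j, Matrix (Fin (k j)) (Fin (l j)) ℂ))
    (hφ : ∀ x y z : (∀ i, Matrix (Fin (n i)) (Fin (m i)) ℂ),
      φ (fun i => x i * (y i)ᴴ * z i) = fun j => φ x j * (φ y j)ᴴ * φ z j) :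
    ∃ α : Fin q → Fin p → ℕ,
      (∀ j, (∑ i, α j i * n i) ≤ k j ∧ (∑ i, α j i * m i) ≤ l j) ∧
      ∀ j, ∃ U ∈ Matrix.unitaryGroup (Fin (k j)) ℂ, ∃ V ∈ Matrix.unitaryGroup (Fin (l j)) ℂ,
        ∀ A : (∀ i, Matrix (Fin (n i)) (Fin (m i)) ℂ),
          φ A j = U * (∑ i, diagPadAt (k j) (l j)
              (∑ i' ∈ Finset.Iio i, α j i' * n i')
              (∑ i' ∈ Finset.Iio i, α j i' * m i')
              (α j i) (A i)) * V := by
  choose α hα U hU V hV hφU using fun j =>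
    tro_component_standard_form (ψ := LinearMap.proj j ∘ₗ φ) fun x y z => congrFun (hφ x y z) j
  exact ⟨α, hα, fun j => ⟨U j, hU j, V j, hV j, hφU j⟩⟩
end

section
/- Let n, α ≥ 1 and let U ∈ M_{αn}(ℂ) be a unitary matrix, regarded as an α×α block matrix (U_{i,j}) with blocks U_{i,j} ∈ M_n(ℂ). Suppose that for every symmetric matrix A ∈ M_n(ℂ) the matrix U · diag_α(A) is skew-symmetric. Then α is even and there is a skew-symmetric unitary matrix Λ = (λ_{i,j}) ∈ M_α(ℂ) such that U_{i,j} = λ_{i,j}·I_n for all i,j (that is, U = Λ ⊗ I_n is the Kronecker product of Λ with the n×n identity matrix). -/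
open Matrix

/-- The `N × M` matrix having the block-diagonal matrix `diag_k(A)`
(built from `k` copies of the `n × m` matrix `A`) as its top-left corner block
and zeros elsewhere. -/
noncomputable def diagPad {n m : ℕ} (N M k : ℕ) (A : Matrix (Fin n) (Fin m) ℂ) :
    Matrix (Fin N) (Fin M) ℂ := Matrix.of fun i j =>
  if h : (i : ℕ) % n < n ∧ (j : ℕ) % m < m ∧ (i : ℕ) < k * n ∧ (j : ℕ) < k * m ∧
      (i : ℕ) / n = (j : ℕ) / m
  then A ⟨(i : ℕ) % n, h.1⟩ ⟨(j : ℕ) % m, h.2.1⟩ else 0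

theorem blockIdxLt {α n : ℕ} (i : Fin α) (a : Fin n) : (i : ℕ) * n + (a : ℕ) < α * n := by
  have h1 := i.isLt
  have h2 := a.isLt
  nlinarith

def bidx {α n : ℕ} (i : Fin α) (a : Fin n) : Fin (α * n) := ⟨(i : ℕ) * n + a, blockIdxLt i a⟩

lemma bidx_mod {α n : ℕ} (i : Fin α) (a : Fin n) : ((bidx i a : Fin (α*n)) : ℕ) % n = a := by
  show ((i:ℕ)*n + a) % n = a
  rw [Nat.add_comm, Nat.add_mul_mod_self_right, Nat.mod_eq_of_lt a.isLt]

lemma bidx_div {α n : ℕ} (hn : 0 < n) (i : Fin α) (a : Fin n) :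
    ((bidx i a : Fin (α*n)) : ℕ) / n = i := by
  show ((i:ℕ)*n + a) / n = i
  rw [Nat.add_comm, Nat.add_mul_div_right _ _ hn, Nat.div_eq_of_lt a.isLt, Nat.zero_add]

lemma diagPad_bidx {α n : ℕ} (hn : 0 < n) (A : Matrix (Fin n) (Fin n) ℂ)
    (i j : Fin α) (a b : Fin n) :
    diagPad (α*n) (α*n) α A (bidx i a) (bidx j b) = if i = j then A a b else 0 := by
  by_cases hij : i = j
  · subst hij
    rw [if_pos rfl]
    have hc : ((bidx i a : Fin (α*n)) : ℕ) % n < n ∧ ((bidx i b : Fin (α*n)) : ℕ) % n < n ∧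
        ((bidx i a : Fin (α*n)) : ℕ) < α * n ∧ ((bidx i b : Fin (α*n)) : ℕ) < α * n ∧
        ((bidx i a : Fin (α*n)) : ℕ) / n = ((bidx i b : Fin (α*n)) : ℕ) / n := by
      refine ⟨by rw [bidx_mod]; exact a.isLt, by rw [bidx_mod]; exact b.isLt,
        (bidx i a).isLt, (bidx i b).isLt, by rw [bidx_div hn, bidx_div hn]⟩
    show dite _ _ _ = A a b
    rw [dif_pos hc]
    congr 1
    · exact Fin.ext (bidx_mod i a)
    · exact Fin.ext (bidx_mod i b)
  · rw [if_neg hij]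
    show dite _ _ _ = 0
    rw [dif_neg]
    rintro ⟨-, -, -, -, h5⟩
    rw [bidx_div hn, bidx_div hn] at h5
    exact hij (Fin.ext h5)

lemma sum_blocks {α n : ℕ} (f : Fin (α*n) → ℂ) :
    ∑ k, f k = ∑ l : Fin α, ∑ c : Fin n, f (bidx l c) := by
  rw [← Equiv.sum_comp (finProdFinEquiv : Fin α × Fin n ≃ Fin (α*n)) f, Fintype.sum_prod_type]
  refine Finset.sum_congr rfl fun l _ => Finset.sum_congr rfl fun c _ => congrArg f ?_
  apply Fin.ext
  show (c : ℕ) + n * l = (l : ℕ) * n + c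
  ring

lemma mul_diagPad_apply {α n : ℕ} (hn : 0 < n) (U : Matrix (Fin (α*n)) (Fin (α*n)) ℂ)
    (A : Matrix (Fin n) (Fin n) ℂ) (q : Fin (α*n)) (i : Fin α) (a : Fin n) :
    (U * diagPad (α*n) (α*n) α A) q (bidx i a) = ∑ c, U q (bidx i c) * A c a := by
  rw [Matrix.mul_apply, sum_blocks (fun k => U q k * diagPad (α*n) (α*n) α A k (bidx i a))]
  simp only [diagPad_bidx hn, mul_ite, mul_zero]
  rw [Finset.sum_comm]
  simp [Finset.sum_ite_eq']

-- symmetric elementary matrix E_{xy} + E_{yx}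
noncomputable def sb {n : ℕ} (x y : Fin n) : Matrix (Fin n) (Fin n) ℂ := Matrix.of fun c d =>
  (if c = x ∧ d = y then 1 else 0) + (if c = y ∧ d = x then 1 else 0)

lemma sb_symm {n : ℕ} (x y : Fin n) : (sb x y)ᵀ = sb x y := by
  ext c d
  show (if d = x ∧ c = y then (1:ℂ) else 0) + (if d = y ∧ c = x then 1 else 0)
      = (if c = x ∧ d = y then 1 else 0) + (if c = y ∧ d = x then 1 else 0)
  rw [add_comm]
  congr 1 <;> simp [and_comm]

/-- if `U` is unitary and `U · diag_α(A)` is skew-symmetric for every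
symmetric `A`, then `α` is even and `U = Λ ⊗ I_n` for a skew-symmetric unitary `Λ`. -/
theorem unitary_intertwining_symm_skew (n α : ℕ) (hn : 1 ≤ n) (hα : 1 ≤ α)
    (U : Matrix (Fin (α * n)) (Fin (α * n)) ℂ)
    (hU : U ∈ Matrix.unitaryGroup (Fin (α * n)) ℂ)
    (h : ∀ A : Matrix (Fin n) (Fin n) ℂ, Aᵀ = A →
      (U * diagPad (α * n) (α * n) α A)ᵀ = -(U * diagPad (α * n) (α * n) α A)) :
    Even α ∧
      ∃ Λ ∈ Matrix.unitaryGroup (Fin α) ℂ, Λᵀ = -Λ ∧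
        ∀ (i j : Fin α) (a b : Fin n),
          U ⟨(i : ℕ) * n + (a : ℕ), blockIdxLt i a⟩ ⟨(j : ℕ) * n + (b : ℕ), blockIdxLt j b⟩ =
            Λ i j * (if a = b then 1 else 0) := by
  have hn' : 0 < n := hn
  -- the basic relation
  have rel : ∀ A : Matrix (Fin n) (Fin n) ℂ, Aᵀ = A → ∀ (i j : Fin α) (a b : Fin n),
      ∑ c, U (bidx j b) (bidx i c) * A c a = -∑ c, U (bidx i a) (bidx j c) * A c b := by
    intro A hA i j a b
    have := congrFun (congrFun (h A hA) (bidx i a)) (bidx j b)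
    simpa [Matrix.transpose_apply, Matrix.neg_apply, mul_diagPad_apply hn'] using this
  -- skewness: U_(jb)(ia) = - U_(ia)(jb)
  have skew : ∀ (i j : Fin α) (a b : Fin n),
      U (bidx j b) (bidx i a) = -U (bidx i a) (bidx j b) := by
    intro i j a b
    have := rel 1 Matrix.transpose_one i j a b
    simpa [Matrix.one_apply, Finset.sum_ite_eq'] using this
  -- computed relation for sb x y
  have rel2 : ∀ (x y : Fin n) (i j : Fin α) (a b : Fin n),
      ((if a = y then U (bidx j b) (bidx i x) else 0) +
        (if a = x then U (bidx j b) (bidx i y) else 0)) =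
      -((if b = y then U (bidx i a) (bidx j x) else 0) +
        (if b = x then U (bidx i a) (bidx j y) else 0)) := by
    intro x y i j a b
    have := rel (sb x y) (sb_symm x y) i j a b
    simpa [sb, mul_add, Finset.sum_add_distrib, mul_ite, mul_one, mul_zero, ite_and,
      Finset.sum_ite_eq'] using this
  -- off-diagonal entries vanish
  have offdiag : ∀ (i j : Fin α) (a b : Fin n), a ≠ b →
      U (bidx i a) (bidx j b) = 0 := by
    intro i j a b hab
    have := rel2 b b j i b a
    simp [hab, Ne.symm hab] at this
    exact this
  -- diagonal entries are constant along the block diagonal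
  have diagc : ∀ (i j : Fin α) (x y : Fin n),
      U (bidx i x) (bidx j x) = U (bidx i y) (bidx j y) := by
    intro i j x y
    by_cases hxy : x = y
    · rw [hxy]
    · have h2 := rel2 x y i j y x
      simp [hxy, Ne.symm hxy] at h2
      -- h2 : U (bidx j x) (bidx i x) = -U (bidx i y) (bidx j y)
      have h1 := skew i j x x
      rw [h1] at h2
      have := neg_injective h2
      exact this
  set z : Fin n := ⟨0, hn'⟩ with hz
  set Λ : Matrix (Fin α) (Fin α) ℂ := Matrix.of fun i j => U (bidx i z) (bidx j z) with hΛ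
  have entry : ∀ (i j : Fin α) (a b : Fin n),
      U (bidx i a) (bidx j b) = Λ i j * (if a = b then 1 else 0) := by
    intro i j a b
    by_cases hab : a = b
    · subst hab; rw [if_pos rfl, mul_one]; exact diagc i j a z
    · rw [if_neg hab, mul_zero]; exact offdiag i j a b hab
  have skewΛ : Λᵀ = -Λ := by
    ext i j
    show U (bidx j z) (bidx i z) = -U (bidx i z) (bidx j z)
    exact skew i j z z
  -- Λ is unitary
  have bidx_z_inj : ∀ i j : Fin α, (bidx i z : Fin (α*n)) = bidx j z ↔ i = j := by
    intro i j
    constructor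
    · intro hh
      have : (i : ℕ) * n + 0 = (j : ℕ) * n + 0 := congrArg Fin.val hh
      exact Fin.ext (Nat.eq_of_mul_eq_mul_right hn' (by omega))
    · rintro rfl; rfl
  have hUU : U * star U = 1 := (Matrix.mem_unitaryGroup_iff).mp hU
  have hΛU : Λ * star Λ = 1 := by
    ext i j
    have := congrFun (congrFun hUU (bidx i z)) (bidx j z)
    rw [Matrix.mul_apply] at this
    rw [sum_blocks (fun k => U (bidx i z) k * star U k (bidx j z))] at this
    have lhs : ∀ (l : Fin α) (c : Fin n),
        U (bidx i z) (bidx l c) * star U (bidx l c) (bidx j z)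
          = (Λ i l * (if z = c then 1 else 0)) *
            star (Λ j l * (if z = c then 1 else 0)) := by
      intro l c
      rw [Matrix.star_apply, entry, entry]
    simp only [lhs] at this
    rw [Matrix.mul_apply]
    simp only [Matrix.one_apply, bidx_z_inj] at this ⊢
    rw [← this]
    simp [Matrix.star_apply, star_mul', apply_ite star, star_one, star_zero, mul_ite, ite_mul,
      mul_one, mul_zero, zero_mul, one_mul, Finset.sum_ite_eq, mul_comm]
  have hΛmem : Λ ∈ Matrix.unitaryGroup (Fin α) ℂ := Matrix.mem_unitaryGroup_iff.mpr hΛU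
  -- evenness
  have hdet : Λ.det ≠ 0 := by
    intro h0
    have : Λ.det * (star Λ).det = 1 := by rw [← Matrix.det_mul, hΛU, Matrix.det_one]
    rw [h0, zero_mul] at this
    exact zero_ne_one this
  have heven : Even α := by
    have h1 : Λ.det = (-1 : ℂ) ^ α * Λ.det := by
      conv_lhs => rw [← Matrix.det_transpose, skewΛ]
      rw [Matrix.det_neg]
      simp
    have h2 : ((-1 : ℂ) ^ α) = 1 := by
      have h3 : ((-1 : ℂ) ^ α - 1) * Λ.det = 0 := by linear_combination -h1
      rcases mul_eq_zero.mp h3 with h4 | h4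
      · linear_combination h4
      · exact absurd h4 hdet
    exact (neg_one_pow_eq_one_iff_even (by norm_num : (-1 : ℂ) ≠ 1)).mp h2
  exact ⟨heven, Λ, hΛmem, skewΛ, fun i j a b => entry i j a b⟩
end

section
/- Let Z₁ ⊆ B(H₁) and Z₂ ⊆ B(H₂) be spin factors and let φ : Z₁ → Z₂ be an injective linear map satisfying φ({a,b,c}) = {φ(a),φ(b),φ(c)} for all a,b,c ∈ Z₁. Then there exists λ ∈ ℂ with |λ| = 1 such that φ(x)* = λ·φ(x) for every self-adjoint x ∈ Z₁. -/
/-!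
For self-adjoint `x ≠ 0` in `Z₁`, `x² = s • 1` with `s ≠ 0` by the C*-identity, so
`{x, x, v} = s • v` for every `v`. Hence `y = φ x` satisfies `y y* y = s y` and
`y y* w + w y* y = 2 s w` for every `w` in the image. With `y² = t` and `y y* + y* y = e`
(polarisation in a spin factor) this gives `t y* = (e - s) y`. If `t ≠ 0`, `y*` is a multiple
of `y`. If `t = 0`, then `y y* / s` and `y* y / s` are complementary idempotents and every
such `w` is forced to be a multiple of `y`, which injectivity and `dim Z₁ ≥ 2` rule out.
Comparing the scalars obtained for `x₀`, `x` and `x + x₀` shows that they agree, and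
`y** = y` makes the common scalar unimodular.
-/

section Algebra

variable {𝕜 A : Type*} [Field 𝕜] [Ring A] [Algebra 𝕜 A]

theorem mul_add_mul_eq_smul_one_of_mul_self {a b : A} {α β γ : 𝕜} (ha : a * a = α • 1)
    (hb : b * b = β • 1) (hab : (a + b) * (a + b) = γ • 1) :
    a * b + b * a = (γ - α - β) • 1 := by
  rw [sub_smul, sub_smul, ← hab, ← ha, ← hb]
  noncomm_ring

theorem eq_smul_of_mul_self_eq_zero [NeZero (2 : 𝕜)] {y z w : A} {s g : 𝕜} (hs : s ≠ 0)
    (hyy : y * y = 0) (hyz : y * z + z * y = s • 1) (hw : y * z * w + w * z * y = (2 * s) • w)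
    (hzw : z * w + w * z = g • 1) :
    w = (g / s) • y := by
  -- With `u = y z` and `v = z y`: `v u = 0` and `v² = s v`, so `v w v = 2 s v w` forces `v w = 0`;
  -- then `u w = s w`, whence `y w = 0` and `s w = y (z w + w z) = g y`.
  have hvu : z * y * (y * z) = 0 := by
    rw [mul_assoc, ← mul_assoc y, hyy, zero_mul, mul_zero]
  have hvv : z * y * (z * y) = s • (z * y) := by
    calc z * y * (z * y) = z * (y * z + z * y) * y - z * z * (y * y) := by noncomm_ring
      _ = s • (z * y) := by rw [hyz, hyy]; simp
  have hvwv : z * y * w * (z * y) = (2 * s) • (z * y * w) := by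
    calc z * y * w * (z * y) = z * y * (y * z * w + w * z * y) - z * y * (y * z) * w := by
          noncomm_ring
      _ = (2 * s) • (z * y * w) := by rw [hw, hvu]; simp
  have hvwv0 : z * y * w * (z * y) = 0 := by
    have h : s • (z * y * w * (z * y)) = (2 * s) • (z * y * w * (z * y)) := by
      calc s • (z * y * w * (z * y)) = z * y * w * (z * y * (z * y)) := by
            rw [hvv, mul_smul_comm]
        _ = z * y * w * (z * y) * (z * y) := by noncomm_ring
        _ = (2 * s) • (z * y * w * (z * y)) := by simp only [hvwv, smul_mul_assoc]
    rw [two_mul, add_smul, right_eq_add] at h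
    exact (smul_eq_zero.mp h).resolve_left hs
  have hvw : z * y * w = 0 := by
    rw [hvwv] at hvwv0
    exact (smul_eq_zero.mp hvwv0).resolve_left (mul_ne_zero two_ne_zero hs)
  have huw : y * z * w = s • w := by
    calc y * z * w = (y * z + z * y) * w - z * y * w := by noncomm_ring
      _ = s • w := by rw [hyz, hvw]; simp
  have hyw : y * w = 0 := by
    have h : s • (y * w) = 0 := by
      calc s • (y * w) = y * (y * z * w) := by rw [huw, mul_smul_comm]
        _ = 0 := by rw [← mul_assoc, ← mul_assoc, hyy]; simp
    exact (smul_eq_zero.mp h).resolve_left hs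
  have h : s • w = g • y := by
    calc s • w = y * (z * w + w * z) - y * w * z := by rw [← huw]; noncomm_ring
      _ = g • y := by rw [hzw, hyw]; simp
  rw [div_eq_inv_mul, mul_smul, ← h, smul_smul, inv_mul_cancel₀ hs, one_smul]

theorem exists_mul_add_mul_eq_smul_one {Z : Submodule 𝕜 A}
    (hsq : ∀ a ∈ Z, ∃ c : 𝕜, a * a = c • (1 : A)) {a b : A} (ha : a ∈ Z) (hb : b ∈ Z) :
    ∃ c : 𝕜, a * b + b * a = c • 1 := by
  obtain ⟨α, hα⟩ := hsq a ha
  obtain ⟨β, hβ⟩ := hsq b hb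
  obtain ⟨γ, hγ⟩ := hsq (a + b) (Z.add_mem ha hb)
  exact ⟨γ - α - β, mul_add_mul_eq_smul_one_of_mul_self hα hβ hγ⟩

theorem star_eq_smul_or_eq_smul_of_mul_star_mul [StarRing A] [NeZero (2 : 𝕜)]
    {Z : Submodule 𝕜 A} (hstar : ∀ a ∈ Z, star a ∈ Z) (hsq : ∀ a ∈ Z, ∃ c : 𝕜, a * a = c • (1 : A))
    {y w : A} (hy : y ∈ Z) (hw : w ∈ Z) (hy0 : y ≠ 0) {s : 𝕜} (hs : s ≠ 0)
    (hyy : y * star y * y = s • y) (hyw : y * star y * w + w * star y * y = (2 * s) • w) :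
    (∃ μ : 𝕜, star y = μ • y) ∨ ∃ c : 𝕜, w = c • y := by
  obtain ⟨t, ht⟩ := hsq y hy
  obtain ⟨e, he⟩ := exists_mul_add_mul_eq_smul_one hsq hy (hstar y hy)
  have key : t • star y = (e - s) • y := by
    calc t • star y = y * (y * star y + star y * y) - y * star y * y := by
          rw [← one_mul (star y), ← smul_mul_assoc, ← ht]; noncomm_ring
      _ = (e - s) • y := by rw [he, hyy, sub_smul]; simp
  by_cases ht0 : t = 0
  · right
    have hes : e = s := by
      rw [ht0, zero_smul, eq_comm, smul_eq_zero, sub_eq_zero] at key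
      exact key.resolve_right hy0
    obtain ⟨g, hg⟩ := exists_mul_add_mul_eq_smul_one hsq (hstar y hy) hw
    exact ⟨g / s, eq_smul_of_mul_self_eq_zero hs (by rw [ht, ht0, zero_smul]) (hes ▸ he) hyw hg⟩
  · left
    refine ⟨(e - s) / t, ?_⟩
    rw [div_eq_inv_mul, mul_smul, ← key, smul_smul, inv_mul_cancel₀ ht0, one_smul]

end Algebra

section StarModule

variable {𝕜 M : Type*} [Field 𝕜] [StarRing 𝕜] [AddCommGroup M] [Module 𝕜 M] [StarAddMonoid M]
  [StarModule 𝕜 M]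

theorem star_eq_of_isSelfAdjoint_smul {x : M} {r : 𝕜} (hx0 : x ≠ 0) (hx : IsSelfAdjoint x)
    (hrx : IsSelfAdjoint (r • x)) : star r = r := by
  rw [IsSelfAdjoint, star_smul, hx.star_eq] at hrx
  exact smul_left_injective 𝕜 hx0 hrx

theorem star_eq_smul_of_star_add_eq_smul {v w : M} {a b c : 𝕜} (hw : w ≠ 0)
    (hv : star v = a • v) (hwb : star w = b • w) (hvw : star (v + w) = c • (v + w))
    (hreal : ∀ r : 𝕜, v = r • w → star r = r) : star v = b • v := by
  have h : (a - c) • v = (c - b) • w := by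
    rw [star_add, hv, hwb] at hvw
    linear_combination (norm := module) hvw
  rcases eq_or_ne a c with rfl | hac
  · rw [sub_self, zero_smul, eq_comm, smul_eq_zero, sub_eq_zero] at h
    rw [hv, h.resolve_right hw]
  · have hr : v = ((a - c)⁻¹ * (c - b)) • w := by
      rw [mul_smul, ← h, smul_smul, inv_mul_cancel₀ (sub_ne_zero.2 hac), one_smul]
    rw [hr, star_smul, hwb, hreal _ hr, smul_comm]

end StarModule

theorem norm_eq_one_of_star_eq_smul {M : Type*} [AddCommGroup M] [Module ℂ M] [StarAddMonoid M]
    [StarModule ℂ M] {y : M} {μ : ℂ} (hy : y ≠ 0) (h : star y = μ • y) : ‖μ‖ = 1 := by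
  have h1 : (star μ * μ) • y = (1 : ℂ) • y := by
    rw [one_smul, mul_smul, ← h, ← star_smul, ← h, star_star]
  rw [smul_left_injective ℂ hy |>.eq_iff, Complex.star_def, Complex.conj_mul'] at h1
  exact (pow_eq_one_iff_of_nonneg (norm_nonneg μ) two_ne_zero).1 (by exact_mod_cast h1)

section JordanTriple

variable {A B : Type*} [Ring A] [StarRing A] [Algebra ℂ A] [Ring B] [StarRing B] [Algebra ℂ B]

noncomputable def jordanTriple (a b c : A) : A := (1 / 2 : ℂ) • (a * star b * c + c * star b * a)

theorem jordanTriple_self_self {a : A} {s : ℂ} (ha : IsSelfAdjoint a) (hs : a * a = s • 1)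
    (b : A) : jordanTriple a a b = s • b := by
  rw [jordanTriple, ha.star_eq, hs, mul_assoc b, hs, smul_mul_assoc, mul_smul_comm, one_mul,
    mul_one]
  module

-- `{a, b, c}` need not lie in `Z₁`, so preservation is asked only when it equals some `w ∈ Z₁`.
def IsTripleHom {Z₁ : Submodule ℂ A} {Z₂ : Submodule ℂ B} (φ : Z₁ →ₗ[ℂ] Z₂) : Prop :=
  ∀ a b c w : Z₁, (w : A) = jordanTriple (a : A) b c →
    (φ w : B) = jordanTriple (φ a : B) (φ b) (φ c)

end JordanTriple

theorem IsTripleHom.exists_star_eq_smul {A B : Type*} [NormedRing A] [StarRing A] [CStarRing A]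
    [Algebra ℂ A] [Ring B] [StarRing B] [Algebra ℂ B]
    {Z₁ : Submodule ℂ A} {Z₂ : Submodule ℂ B} {φ : Z₁ →ₗ[ℂ] Z₂} (hφ : IsTripleHom φ)
    (hinj : Function.Injective φ) (hdim : 2 ≤ Module.finrank ℂ Z₁)
    (hsq₁ : ∀ a ∈ Z₁, ∃ c : ℂ, a * a = c • (1 : A)) (hstar₂ : ∀ a ∈ Z₂, star a ∈ Z₂)
    (hsq₂ : ∀ a ∈ Z₂, ∃ c : ℂ, a * a = c • (1 : B)) {x : Z₁} (hx : IsSelfAdjoint (x : A)) :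
    ∃ μ : ℂ, star (φ x : B) = μ • (φ x : B) := by
  rcases eq_or_ne x 0 with rfl | hx0
  · exact ⟨0, by simp⟩
  obtain ⟨s, hs⟩ := hsq₁ x x.2
  have hs0 : s ≠ 0 := by
    rintro rfl
    refine hx0 (Subtype.ext ((CStarRing.star_mul_self_eq_zero_iff _).1 ?_))
    rw [hx.star_eq, hs, zero_smul]
  have hφx : ∀ v : Z₁,
      (φ x : B) * star (φ x : B) * φ v + φ v * star (φ x : B) * φ x = (2 * s) • (φ v : B) := by
    intro v
    have h := hφ x x v (s • v) (jordanTriple_self_self hx hs v).symm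
    rw [map_smul, Submodule.coe_smul, jordanTriple] at h
    rw [mul_smul, h, smul_smul]
    norm_num
  have hφxx : (φ x : B) * star (φ x : B) * φ x = s • (φ x : B) := by
    have h := hφx x
    rw [← two_smul ℂ, mul_smul] at h
    exact smul_right_injective B two_ne_zero h
  obtain ⟨x', hx'⟩ : ∃ x' : Z₁, ∀ c : ℂ, x' ≠ c • x := by
    by_contra! h
    exact (finrank_le_one x fun w => (h w).imp fun c hc => hc.symm).not_gt hdim
  refine (star_eq_smul_or_eq_smul_of_mul_star_mul hstar₂ hsq₂ (φ x).2 (φ x').2 ?_ hs0 hφxx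
    (hφx x')).resolve_right ?_
  · simpa using hinj.ne hx0
  · rintro ⟨c, hc⟩
    exact hx' c (hinj (Subtype.ext (by rw [hc, map_smul, Submodule.coe_smul])))

theorem spin_factor_morphism_selfadjoint_part_general
    {H₁ : Type*} [NormedAddCommGroup H₁] [InnerProductSpace ℂ H₁] [CompleteSpace H₁]
    {H₂ : Type*} [NormedAddCommGroup H₂] [InnerProductSpace ℂ H₂] [CompleteSpace H₂]
    (Z₁ : Submodule ℂ (H₁ →L[ℂ] H₁)) (Z₂ : Submodule ℂ (H₂ →L[ℂ] H₂))
    (hstar₂ : ∀ A ∈ Z₂, star A ∈ Z₂)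
    (hsq₁ : ∀ A ∈ Z₁, ∃ c : ℂ, A * A = c • (1 : H₁ →L[ℂ] H₁))
    (hsq₂ : ∀ A ∈ Z₂, ∃ c : ℂ, A * A = c • (1 : H₂ →L[ℂ] H₂))
    (hdim₁ : 2 ≤ Module.finrank ℂ Z₁)
    (φ : Z₁ →ₗ[ℂ] Z₂) (hinj : Function.Injective φ)
    (hφ : ∀ a b c w : Z₁,
      (w : H₁ →L[ℂ] H₁) =
        (1/2 : ℂ) • ((a : H₁ →L[ℂ] H₁) * star (b : H₁ →L[ℂ] H₁) * (c : H₁ →L[ℂ] H₁) +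
          (c : H₁ →L[ℂ] H₁) * star (b : H₁ →L[ℂ] H₁) * (a : H₁ →L[ℂ] H₁)) →
      (φ w : H₂ →L[ℂ] H₂) =
        (1/2 : ℂ) • ((φ a : H₂ →L[ℂ] H₂) * star (φ b : H₂ →L[ℂ] H₂) * (φ c : H₂ →L[ℂ] H₂) +
          (φ c : H₂ →L[ℂ] H₂) * star (φ b : H₂ →L[ℂ] H₂) * (φ a : H₂ →L[ℂ] H₂))) :
    ∃ lam : ℂ, ‖lam‖ = 1 ∧
      ∀ x : Z₁, star (x : H₁ →L[ℂ] H₁) = (x : H₁ →L[ℂ] H₁) →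
        star (φ x : H₂ →L[ℂ] H₂) = lam • (φ x : H₂ →L[ℂ] H₂) := by
  have hφsa : ∀ x : Z₁, IsSelfAdjoint (x : H₁ →L[ℂ] H₁) →
      ∃ μ : ℂ, star (φ x : H₂ →L[ℂ] H₂) = μ • (φ x : H₂ →L[ℂ] H₂) :=
    fun _ hx => IsTripleHom.exists_star_eq_smul hφ hinj hdim₁ hsq₁ hstar₂ hsq₂ hx
  by_cases h : ∃ x₀ : Z₁, IsSelfAdjoint (x₀ : H₁ →L[ℂ] H₁) ∧ x₀ ≠ 0
  · obtain ⟨x₀, hx₀, hx₀0⟩ := h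
    have hφx₀ : (φ x₀ : H₂ →L[ℂ] H₂) ≠ 0 := by simpa using hinj.ne hx₀0
    obtain ⟨μ, hμ⟩ := hφsa x₀ hx₀
    refine ⟨μ, norm_eq_one_of_star_eq_smul hφx₀ hμ, fun x hx => ?_⟩
    obtain ⟨a, ha⟩ := hφsa x hx
    obtain ⟨c, hc⟩ := hφsa (x + x₀) (IsSelfAdjoint.add hx hx₀)
    rw [map_add, Submodule.coe_add] at hc
    refine star_eq_smul_of_star_add_eq_smul hφx₀ ha hμ hc fun r hr => ?_
    have hxr : x = r • x₀ := hinj (Subtype.ext (by rw [hr, map_smul, Submodule.coe_smul]))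
    exact star_eq_of_isSelfAdjoint_smul (by simpa using hx₀0) hx₀ (by rwa [hxr] at hx)
  · push Not at h
    exact ⟨1, norm_one, fun x hx => by simp [h x hx]⟩

/-- an injective triple morphism between spin factors maps self-adjoint
elements to `λ`-multiples of their adjoints, for a fixed unimodular `λ`. -/
theorem spin_factor_morphism_selfadjoint_part
    {H₁ : Type*} [NormedAddCommGroup H₁] [InnerProductSpace ℂ H₁] [CompleteSpace H₁]
    [Nontrivial H₁]
    {H₂ : Type*} [NormedAddCommGroup H₂] [InnerProductSpace ℂ H₂] [CompleteSpace H₂]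
    [Nontrivial H₂]
    (Z₁ : Submodule ℂ (H₁ →L[ℂ] H₁)) (Z₂ : Submodule ℂ (H₂ →L[ℂ] H₂))
    [FiniteDimensional ℂ Z₁] [FiniteDimensional ℂ Z₂]
    (hstar₁ : ∀ A ∈ Z₁, star A ∈ Z₁) (hstar₂ : ∀ A ∈ Z₂, star A ∈ Z₂)
    (hsq₁ : ∀ A ∈ Z₁, ∃ c : ℂ, A * A = c • (1 : H₁ →L[ℂ] H₁))
    (hsq₂ : ∀ A ∈ Z₂, ∃ c : ℂ, A * A = c • (1 : H₂ →L[ℂ] H₂))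
    (hdim₁ : 2 ≤ Module.finrank ℂ Z₁) (hdim₂ : 2 ≤ Module.finrank ℂ Z₂)
    (φ : Z₁ →ₗ[ℂ] Z₂) (hinj : Function.Injective φ)
    (hφ : ∀ a b c w : Z₁,
      (w : H₁ →L[ℂ] H₁) =
        (1/2 : ℂ) • ((a : H₁ →L[ℂ] H₁) * star (b : H₁ →L[ℂ] H₁) * (c : H₁ →L[ℂ] H₁) +
          (c : H₁ →L[ℂ] H₁) * star (b : H₁ →L[ℂ] H₁) * (a : H₁ →L[ℂ] H₁)) →
      (φ w : H₂ →L[ℂ] H₂) =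
        (1/2 : ℂ) • ((φ a : H₂ →L[ℂ] H₂) * star (φ b : H₂ →L[ℂ] H₂) * (φ c : H₂ →L[ℂ] H₂) +
          (φ c : H₂ →L[ℂ] H₂) * star (φ b : H₂ →L[ℂ] H₂) * (φ a : H₂ →L[ℂ] H₂))) :
    ∃ lam : ℂ, ‖lam‖ = 1 ∧
      ∀ x : Z₁, star (x : H₁ →L[ℂ] H₁) = (x : H₁ →L[ℂ] H₁) →
        star (φ x : H₂ →L[ℂ] H₂) = lam • (φ x : H₂ →L[ℂ] H₂) :=
  spin_factor_morphism_selfadjoint_part_general Z₁ Z₂ hstar₂ hsq₁ hsq₂ hdim₁ φ hinj hφ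
end

section
/- Let Z₁ ⊆ B(H₁) and Z₂ ⊆ B(H₂) be spin factors and let φ : Z₁ → Z₂ be a nonzero injective linear map satisfying φ({a,b,c}) = {φ(a),φ(b),φ(c)} for all a,b,c ∈ Z₁. Then there exists μ ∈ ℂ with |μ| = 1 such that the map U := μ·φ satisfies U(x*) = U(x)* for every x ∈ Z₁ and is an isometric embedding for the canonical Hilbert space structures: ⟨U(x),U(y)⟩ = ⟨x,y⟩ for all x,y ∈ Z₁, where ⟨·,·⟩ denotes the canonical inner products of Z₁ and Z₂ respectively. -/
/-!
Write `β` for the symmetric bilinear form with `a b + b a = 2 β(a, b) • 1`, so that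
`⟨a, b⟩ = β(a, b*)` and `{a, b, c} = β(a, b*) c + β(c, b*) a - β(a, c) b*`. Put `k(a) = φ(a*)*`.
The morphism identity with `b = d*` expresses `β(φ a, φ c) k(d)` as a combination of `φ a`, `φ c`
and `φ d`. Comparing coefficients along linearly independent pairs shows that `k(c)` is a multiple
of `φ(c)` for every `c`; the only obstruction would be a `c ≠ 0` in the radical of `β`, and there is
none since `c* c + c c* ≠ 0`. Hence `k = λ φ`. Applying `ψ ↦ ψ(·*)*` once more returns `φ`, so
`φ = λ̄ λ φ` and `|λ| = 1`; the identity then collapses to `λ β(φ a, φ c) = β(a, c)`, and any square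
root `μ` of `λ` makes `μ φ` preserve the involution and the inner product.
-/

open scoped ComplexConjugate
open Module

theorem mul_mul_add_mul_mul_eq_of_anticomm {S R : Type*} [CommRing S] [Ring R] [Algebra S R]
    {a x c : R} {p q r : S} (hax : a * x + x * a = p • 1) (hac : a * c + c * a = r • 1)
    (hcx : c * x + x * c = q • 1) :
    a * x * c + c * x * a = p • c + q • a - r • x := by
  calc a * x * c + c * x * a
        = (a * x + x * a) * c - x * (a * c + c * a) + (c * x + x * c) * a := by noncomm_ring
    _ = p • c + q • a - r • x := by
        rw [hax, hac, hcx, smul_mul_assoc, smul_mul_assoc, mul_smul_comm, one_mul, one_mul, mul_one]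
        abel

theorem LinearMap.exists_eq_smul_of_forall_mem_span_singleton {K V W : Type*} [Field K]
    [AddCommGroup V] [Module K V] [AddCommGroup W] [Module K W] {f g : V →ₗ[K] W}
    (hg : Function.Injective g) (h : ∀ v, f v ∈ K ∙ g v) : ∃ a : K, f = a • g := by
  choose b hb using fun v => Submodule.mem_span_singleton.1 (h v)
  let e := LinearEquiv.ofInjective g hg
  let f' : V →ₗ[K] V := e.symm.toLinearMap ∘ₗ
    f.codRestrict (LinearMap.range g) fun v => ⟨b v • v, by rw [map_smul, hb]⟩
  have hf' : ∀ v, g (f' v) = f v := fun v =>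
    LinearEquiv.ofInjective_symm_apply (h := hg) g _
  have hcollinear : ∀ v, f' v = b v • v := fun v => hg (by rw [hf', map_smul, hb])
  obtain ⟨a, ha⟩ := f'.exists_eq_smul_id_of_forall_notLinearIndependent fun v hv => by
    simpa using LinearIndependent.pair_iff.1 hv (b v) (-1) (by rw [hcollinear]; module)
  exact ⟨a, LinearMap.ext fun v => by rw [← hf', ha]; simp⟩

theorem exists_linearIndependent_pair_map_of_one_lt_finrank {K V W : Type*} [Field K]
    [AddCommGroup V] [Module K V] [AddCommGroup W] [Module K W] (hV : 1 < finrank K V)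
    {f : V →ₗ[K] W} (hf : Function.Injective f) {v : V} (hv : v ≠ 0) :
    ∃ w, LinearIndependent K ![f v, f w] := by
  obtain ⟨w, hw⟩ := exists_linearIndependent_pair_of_one_lt_finrank hV hv
  have hfw := hw.map' f (LinearMap.ker_eq_bot.2 hf)
  rw [← FinVec.map_eq] at hfw
  exact ⟨w, hfw⟩

/-- A spin factor, without the requirement `2 ≤ dim Z`. -/
structure IsSpinSubspace {A : Type*} [Ring A] [Star A] [Algebra ℂ A] (Z : Submodule ℂ A) :
    Prop where
  star_mem : ∀ a ∈ Z, star a ∈ Z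
  exists_mul_self_eq : ∀ a ∈ Z, ∃ c : ℂ, a * a = c • (1 : A)

theorem eq_of_two_mul_smul_one_eq {A : Type*} [Ring A] [Algebra ℂ A] [Nontrivial A] {c d : ℂ}
    (h : (2 * c) • (1 : A) = (2 * d) • 1) : c = d := by
  simp only [← Algebra.algebraMap_eq_smul_one] at h
  exact mul_left_cancel₀ two_ne_zero ((algebraMap ℂ A).injective h)

namespace IsSpinSubspace

section Algebraic

variable {A : Type*} [Ring A] [StarRing A] [Algebra ℂ A] {Z : Submodule ℂ A}
  (hZ : IsSpinSubspace Z)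

include hZ in
theorem exists_mul_add_mul_eq (a b : Z) : ∃ c : ℂ, (a : A) * b + b * a = (2 * c) • 1 := by
  obtain ⟨p, hp⟩ := hZ.exists_mul_self_eq _ (Z.add_mem a.2 b.2)
  obtain ⟨q, hq⟩ := hZ.exists_mul_self_eq a a.2
  obtain ⟨r, hr⟩ := hZ.exists_mul_self_eq b b.2
  refine ⟨(p - q - r) / 2, ?_⟩
  calc (a : A) * b + b * a = (a + b) * (a + b) - a * a - b * b := by noncomm_ring
    _ = _ := by rw [hp, hq, hr, ← sub_smul, ← sub_smul]; ring_nf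

section Star

variable [StarModule ℂ A]

def starₗ : Z →ₗ⋆[ℂ] Z where
  toFun a := ⟨star (a : A), hZ.star_mem _ a.2⟩
  map_add' _ _ := Subtype.ext (star_add _ _)
  map_smul' _ _ := Subtype.ext (star_smul _ _)

@[simp]
theorem coe_starₗ (a : Z) : (hZ.starₗ a : A) = star (a : A) := rfl

@[simp]
theorem starₗ_starₗ (a : Z) : hZ.starₗ (hZ.starₗ a) = a :=
  Subtype.ext (star_star _)

end Star

variable [Nontrivial A]

theorem choose_exists_mul_add_mul_eq {a b : Z} {c : ℂ} (h : (a : A) * b + b * a = (2 * c) • 1) :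
    (hZ.exists_mul_add_mul_eq a b).choose = c :=
  eq_of_two_mul_smul_one_eq ((hZ.exists_mul_add_mul_eq a b).choose_spec.symm.trans h)

/-- The symmetric bilinear form `β` with `a b + b a = 2 β(a, b) • 1`; the canonical inner
product of the spin factor is `⟨a, b⟩ = β(a, b*)`. -/
noncomputable def form : LinearMap.BilinForm ℂ Z :=
  LinearMap.mk₂ ℂ (fun a b => (hZ.exists_mul_add_mul_eq a b).choose)
    (fun a a' b => hZ.choose_exists_mul_add_mul_eq <| by
      rw [mul_add, add_smul, ← (hZ.exists_mul_add_mul_eq a b).choose_spec,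
        ← (hZ.exists_mul_add_mul_eq a' b).choose_spec, Submodule.coe_add]
      noncomm_ring)
    (fun t a b => hZ.choose_exists_mul_add_mul_eq <| by
      rw [smul_eq_mul, mul_left_comm, ← smul_smul,
        ← (hZ.exists_mul_add_mul_eq a b).choose_spec, Submodule.coe_smul, smul_mul_assoc,
        mul_smul_comm, smul_add])
    (fun a b b' => hZ.choose_exists_mul_add_mul_eq <| by
      rw [mul_add, add_smul, ← (hZ.exists_mul_add_mul_eq a b).choose_spec,
        ← (hZ.exists_mul_add_mul_eq a b').choose_spec, Submodule.coe_add]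
      noncomm_ring)
    (fun t a b => hZ.choose_exists_mul_add_mul_eq <| by
      rw [smul_eq_mul, mul_left_comm, ← smul_smul,
        ← (hZ.exists_mul_add_mul_eq a b).choose_spec, Submodule.coe_smul, smul_mul_assoc,
        mul_smul_comm, smul_add])

theorem mul_add_mul_eq (a b : Z) : (a : A) * b + b * a = (2 * hZ.form a b) • 1 :=
  (hZ.exists_mul_add_mul_eq a b).choose_spec

theorem form_eq_of {a b : Z} {c : ℂ} (h : (a : A) * b + b * a = (2 * c) • 1) :
    hZ.form a b = c :=
  hZ.choose_exists_mul_add_mul_eq h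

variable [StarModule ℂ A]

/-- The Jordan triple product `{a, b, c} = (a b* c + c b* a) / 2`, see `coe_triple`. -/
noncomputable def triple (a b c : Z) : Z :=
  hZ.form a (hZ.starₗ b) • c + hZ.form c (hZ.starₗ b) • a - hZ.form a c • hZ.starₗ b

theorem coe_triple (a b c : Z) :
    (hZ.triple a b c : A) = (1 / 2 : ℂ) • ((a : A) * star (b : A) * c + c * star (b : A) * a) := by
  have hab := hZ.mul_add_mul_eq a (hZ.starₗ b)
  have hcb := hZ.mul_add_mul_eq c (hZ.starₗ b)
  rw [coe_starₗ] at hab hcb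
  rw [mul_mul_add_mul_mul_eq_of_anticomm hab (hZ.mul_add_mul_eq a c) hcb]
  simp only [triple, Submodule.coe_sub, Submodule.coe_add, Submodule.coe_smul, coe_starₗ]
  module

end Algebraic

theorem form_separatingRight {A : Type*} [CStarAlgebra A] [PartialOrder A] [StarOrderedRing A]
    [Nontrivial A] {Z : Submodule ℂ A} (hZ : IsSpinSubspace Z) : hZ.form.SeparatingRight := by
  intro c hc
  have h := hZ.mul_add_mul_eq (hZ.starₗ c) c
  rw [hc, mul_zero, zero_smul, coe_starₗ] at h
  exact Subtype.ext ((CStarRing.star_mul_self_eq_zero_iff _).1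
    ((add_eq_zero_iff_of_nonneg (star_mul_self_nonneg _) (mul_star_self_nonneg _)).1 h).1)

section Morphism

variable {A₁ A₂ : Type*} [Ring A₁] [StarRing A₁] [Algebra ℂ A₁] [StarModule ℂ A₁]
  [Ring A₂] [StarRing A₂] [Algebra ℂ A₂] [StarModule ℂ A₂]
  {Z₁ : Submodule ℂ A₁} {Z₂ : Submodule ℂ A₂} (hZ₁ : IsSpinSubspace Z₁) (hZ₂ : IsSpinSubspace Z₂)
  (φ : Z₁ →ₗ[ℂ] Z₂)

def intrinsicStar : Z₁ →ₗ[ℂ] Z₂ := hZ₂.starₗ ∘ₛₗ φ ∘ₛₗ hZ₁.starₗ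

theorem intrinsicStar_apply (a : Z₁) :
    hZ₁.intrinsicStar hZ₂ φ a = hZ₂.starₗ (φ (hZ₁.starₗ a)) := rfl

theorem intrinsicStar_smul (t : ℂ) :
    hZ₁.intrinsicStar hZ₂ (t • φ) = conj t • hZ₁.intrinsicStar hZ₂ φ :=
  LinearMap.ext fun a => by simp [intrinsicStar_apply]

theorem intrinsicStar_intrinsicStar :
    hZ₁.intrinsicStar hZ₂ (hZ₁.intrinsicStar hZ₂ φ) = φ :=
  LinearMap.ext fun a => by simp [intrinsicStar_apply]

theorem map_starₗ_of_intrinsicStar_eq_smul {l : ℂ} (hl : hZ₁.intrinsicStar hZ₂ φ = l • φ)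
    (a : Z₁) : φ (hZ₁.starₗ a) = conj l • hZ₂.starₗ (φ a) := by
  simpa [intrinsicStar_apply] using congrArg hZ₂.starₗ (LinearMap.congr_fun hl a)

theorem conj_mul_self_eq_one_of_intrinsicStar_eq_smul (hφ0 : φ ≠ 0) {l : ℂ}
    (hl : hZ₁.intrinsicStar hZ₂ φ = l • φ) : conj l * l = 1 := by
  obtain ⟨a, ha⟩ := DFunLike.ne_iff.1 hφ0
  have h := LinearMap.congr_fun (hZ₁.intrinsicStar_intrinsicStar hZ₂ φ) a
  rw [hl, intrinsicStar_smul, hl, smul_smul] at h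
  exact smul_left_injective ℂ ha (h.trans (one_smul ℂ _).symm)

variable [Nontrivial A₁] [Nontrivial A₂]
  (hφ : ∀ a b c, φ (hZ₁.triple a b c) = hZ₂.triple (φ a) (φ b) (φ c))

include hφ

theorem form_map_smul_intrinsicStar (a c d : Z₁) :
    hZ₂.form (φ a) (φ c) • hZ₁.intrinsicStar hZ₂ φ d =
      (hZ₂.form (φ a) (hZ₁.intrinsicStar hZ₂ φ d) - hZ₁.form a d) • φ c +
        (hZ₂.form (φ c) (hZ₁.intrinsicStar hZ₂ φ d) - hZ₁.form c d) • φ a +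
          hZ₁.form a c • φ d := by
  have h := hφ a (hZ₁.starₗ d) c
  simp only [triple, starₗ_starₗ, map_sub, map_add, map_smul, ← intrinsicStar_apply] at h
  linear_combination (norm := module) h

variable {φ} (hdim : 1 < finrank ℂ Z₁) (hinj : Function.Injective φ)

include hdim hinj

theorem intrinsicStar_apply_mem_span_singleton (hB : hZ₁.form.SeparatingRight) (c : Z₁) :
    hZ₁.intrinsicStar hZ₂ φ c ∈ ℂ ∙ φ c := by
  have key := hZ₁.form_map_smul_intrinsicStar hZ₂ φ hφ
  set k := hZ₁.intrinsicStar hZ₂ φ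
  rcases eq_or_ne c 0 with rfl | hc
  · simp
  have hφc : φ c ≠ 0 := (map_ne_zero_iff φ hinj).2 hc
  obtain ⟨d, hcd⟩ := exists_linearIndependent_pair_map_of_one_lt_finrank hdim hinj hc
  rw [LinearIndependent.pair_iff] at hcd
  have mem_of_smul {p q : ℂ} (hp : p ≠ 0) (h : p • k c = q • φ c) : k c ∈ ℂ ∙ φ c :=
    (Submodule.smul_mem_iff _ hp).1 <|
      h ▸ Submodule.smul_mem _ _ (Submodule.mem_span_singleton_self _)
  by_cases hcc : hZ₂.form (φ c) (φ c) = 0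
  swap
  · exact mem_of_smul (q := 2 * hZ₂.form (φ c) (k c) - hZ₁.form c c) hcc
      (by linear_combination (norm := module) key c c c)
  have hcd' := hcd (2 * (hZ₂.form (φ c) (k d) - hZ₁.form c d)) (hZ₁.form c c)
    (by linear_combination (norm := module) -key c c d + hcc • k d)
  have hkcc : hZ₂.form (φ c) (k c) = hZ₁.form c c := by
    have h := smul_eq_zero.1 (show (2 * hZ₂.form (φ c) (k c) - hZ₁.form c c) • φ c = 0 by
      linear_combination (norm := module) -key c c c + hcc • k c)
    linear_combination (h.resolve_right hφc - hcd'.2) / 2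
  by_cases hP : ∃ a, hZ₂.form (φ a) (φ c) ≠ 0
  · obtain ⟨a, ha⟩ := hP
    exact mem_of_smul ha (by linear_combination (norm := module) key a c c + hkcc • φ a)
  push Not at hP
  -- then `c` lies in the radical of `β`
  refine absurd (hB c fun a => ?_) hc
  refine (hcd (hZ₂.form (φ a) (k d) - hZ₁.form a d) (hZ₁.form a c) ?_).2
  linear_combination (norm := module) -key a c d + hP a • k d - (hcd'.1 / 2) • φ a

theorem exists_intrinsicStar_eq_smul (hB : hZ₁.form.SeparatingRight) :
    ∃ l : ℂ, hZ₁.intrinsicStar hZ₂ φ = l • φ :=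
  LinearMap.exists_eq_smul_of_forall_mem_span_singleton hinj
    (hZ₁.intrinsicStar_apply_mem_span_singleton hZ₂ hφ hdim hinj hB)

theorem mul_form_map_map_of_intrinsicStar_eq_smul {l : ℂ}
    (hl : hZ₁.intrinsicStar hZ₂ φ = l • φ) (a c : Z₁) :
    l * hZ₂.form (φ a) (φ c) = hZ₁.form a c := by
  have key (a c d : Z₁) : (l * hZ₂.form (φ a) (φ c) - hZ₁.form a c) • φ d =
      (l * hZ₂.form (φ a) (φ d) - hZ₁.form a d) • φ c +
        (l * hZ₂.form (φ c) (φ d) - hZ₁.form c d) • φ a := by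
    have h := hZ₁.form_map_smul_intrinsicStar hZ₂ φ hφ a c d
    simp only [hl, LinearMap.smul_apply, map_smul, smul_eq_mul] at h
    linear_combination (norm := module) h
  rcases eq_or_ne a 0 with rfl | ha
  · simp
  have hφa : φ a ≠ 0 := (map_ne_zero_iff φ hinj).2 ha
  obtain ⟨d, had⟩ := exists_linearIndependent_pair_map_of_one_lt_finrank hdim hinj ha
  have haa := (LinearIndependent.pair_iff.1 had (-2 * (l * hZ₂.form (φ a) (φ d) - hZ₁.form a d))
    (l * hZ₂.form (φ a) (φ a) - hZ₁.form a a) (by linear_combination (norm := module) key a a d)).2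
  have hac := smul_eq_zero.1 (show (2 * (l * hZ₂.form (φ a) (φ c) - hZ₁.form a c)) • φ a = 0 by
    linear_combination (norm := module) -key a a c + haa • φ c)
  linear_combination (hac.resolve_right hφa) / 2

theorem exists_unimodular_smul_isometry (hB : hZ₁.form.SeparatingRight) (hφ0 : φ ≠ 0) :
    ∃ μ : ℂ, ‖μ‖ = 1 ∧ (∀ x, μ • φ (hZ₁.starₗ x) = hZ₂.starₗ (μ • φ x)) ∧
      ∀ x y, hZ₂.form (μ • φ x) (hZ₂.starₗ (μ • φ y)) = hZ₁.form x (hZ₁.starₗ y) := by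
  obtain ⟨l, hl⟩ := hZ₁.exists_intrinsicStar_eq_smul hZ₂ hφ hdim hinj hB
  have hl1 := hZ₁.conj_mul_self_eq_one_of_intrinsicStar_eq_smul hZ₂ φ hφ0 hl
  have hnorm_l : ‖l‖ = 1 := by
    rw [Complex.conj_mul'] at hl1
    exact (pow_eq_one_iff_of_nonneg (norm_nonneg l) two_ne_zero).1 (mod_cast hl1)
  obtain ⟨μ, hμ⟩ := IsAlgClosed.exists_pow_nat_eq l two_pos
  have hnorm_μ : ‖μ‖ = 1 := by
    rwa [← hμ, norm_pow, pow_eq_one_iff_of_nonneg (norm_nonneg μ) two_ne_zero] at hnorm_l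
  have hμ1 : conj μ * μ = 1 := by rw [Complex.conj_mul', hnorm_μ]; norm_num
  have hstar := hZ₁.map_starₗ_of_intrinsicStar_eq_smul hZ₂ φ hl
  refine ⟨μ, hnorm_μ, fun x => ?_, fun x y => ?_⟩
  · rw [hstar, smul_smul, map_smulₛₗ, ← hμ, map_pow]
    congr 1
    linear_combination conj μ * hμ1
  · have hy : hZ₂.starₗ (φ y) = l • φ (hZ₁.starₗ y) := by
      rw [hstar, smul_smul, mul_comm, hl1, one_smul]
    rw [map_smulₛₗ hZ₂.starₗ, hy, map_smul, map_smul, map_smul, LinearMap.smul_apply,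
      ← hZ₁.mul_form_map_map_of_intrinsicStar_eq_smul hZ₂ hφ hdim hinj hl]
    simp only [smul_eq_mul]
    linear_combination l * hZ₂.form (φ x) (φ (hZ₁.starₗ y)) * hμ1

end Morphism

end IsSpinSubspace

theorem spin_factor_morphism_standard_form_general
    {H₁ : Type*} [NormedAddCommGroup H₁] [InnerProductSpace ℂ H₁] [CompleteSpace H₁]
    [Nontrivial H₁]
    {H₂ : Type*} [NormedAddCommGroup H₂] [InnerProductSpace ℂ H₂] [CompleteSpace H₂]
    [Nontrivial H₂]
    (Z₁ : Submodule ℂ (H₁ →L[ℂ] H₁)) (Z₂ : Submodule ℂ (H₂ →L[ℂ] H₂))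
    (hstar₁ : ∀ A ∈ Z₁, star A ∈ Z₁) (hstar₂ : ∀ A ∈ Z₂, star A ∈ Z₂)
    (hsq₁ : ∀ A ∈ Z₁, ∃ c : ℂ, A * A = c • (1 : H₁ →L[ℂ] H₁))
    (hsq₂ : ∀ A ∈ Z₂, ∃ c : ℂ, A * A = c • (1 : H₂ →L[ℂ] H₂))
    (hdim₁ : 2 ≤ Module.finrank ℂ Z₁)
    (φ : Z₁ →ₗ[ℂ] Z₂) (hne : φ ≠ 0) (hinj : Function.Injective φ)
    (hφ : ∀ a b c w : Z₁,
      (w : H₁ →L[ℂ] H₁) =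
        (1/2 : ℂ) • ((a : H₁ →L[ℂ] H₁) * star (b : H₁ →L[ℂ] H₁) * (c : H₁ →L[ℂ] H₁) +
          (c : H₁ →L[ℂ] H₁) * star (b : H₁ →L[ℂ] H₁) * (a : H₁ →L[ℂ] H₁)) →
      (φ w : H₂ →L[ℂ] H₂) =
        (1/2 : ℂ) • ((φ a : H₂ →L[ℂ] H₂) * star (φ b : H₂ →L[ℂ] H₂) * (φ c : H₂ →L[ℂ] H₂) +
          (φ c : H₂ →L[ℂ] H₂) * star (φ b : H₂ →L[ℂ] H₂) * (φ a : H₂ →L[ℂ] H₂))) :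
    ∃ μ : ℂ, ‖μ‖ = 1 ∧
      -- `U := μ·φ` preserves the involution: `U(x*) = U(x)*`
      (∀ x y : Z₁, (y : H₁ →L[ℂ] H₁) = star (x : H₁ →L[ℂ] H₁) →
        μ • (φ y : H₂ →L[ℂ] H₂) = star (μ • (φ x : H₂ →L[ℂ] H₂))) ∧
      -- `U := μ·φ` is isometric for the canonical inner products:
      -- if `⟨x,y⟩ = c` in `Z₁` and `⟨U x, U y⟩ = d` in `Z₂`, then `d = c`.
      (∀ x y : Z₁, ∀ c d : ℂ,
        (x : H₁ →L[ℂ] H₁) * star (y : H₁ →L[ℂ] H₁) + star (y : H₁ →L[ℂ] H₁) * (x : H₁ →L[ℂ] H₁)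
            = (2 * c) • (1 : H₁ →L[ℂ] H₁) →
        (μ • (φ x : H₂ →L[ℂ] H₂)) * star (μ • (φ y : H₂ →L[ℂ] H₂)) +
            star (μ • (φ y : H₂ →L[ℂ] H₂)) * (μ • (φ x : H₂ →L[ℂ] H₂))
            = (2 * d) • (1 : H₂ →L[ℂ] H₂) →
        d = c) := by
  have hZ₁ : IsSpinSubspace Z₁ := ⟨hstar₁, hsq₁⟩
  have hZ₂ : IsSpinSubspace Z₂ := ⟨hstar₂, hsq₂⟩
  have hφ' (a b c : Z₁) : φ (hZ₁.triple a b c) = hZ₂.triple (φ a) (φ b) (φ c) :=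
    Subtype.ext <| by rw [hZ₂.coe_triple]; exact hφ a b c _ (hZ₁.coe_triple a b c)
  obtain ⟨μ, hμ, hstar, hform⟩ :=
    hZ₁.exists_unimodular_smul_isometry hZ₂ hφ' hdim₁ hinj hZ₁.form_separatingRight hne
  refine ⟨μ, hμ, fun x y hxy => ?_, fun x y c d hc hd => ?_⟩
  · obtain rfl : y = hZ₁.starₗ x := Subtype.ext hxy
    simpa using congrArg Subtype.val (hstar x)
  · have hc' : hZ₁.form x (hZ₁.starₗ y) = c := hZ₁.form_eq_of (by simpa using hc)
    have hd' : hZ₂.form (μ • φ x) (hZ₂.starₗ (μ • φ y)) = d := hZ₂.form_eq_of (by simpa using hd)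
    rw [← hc', ← hd', hform]

/-- a nonzero injective triple morphism between spin factors is, after
multiplication by a unimodular constant `μ`, an involution-preserving isometric embedding
for the canonical Hilbert space structures (where the canonical inner product `⟨A,B⟩`
is determined by `A B* + B* A = 2⟨A,B⟩·id`). -/
theorem spin_factor_morphism_standard_form
    {H₁ : Type*} [NormedAddCommGroup H₁] [InnerProductSpace ℂ H₁] [CompleteSpace H₁]
    [Nontrivial H₁]
    {H₂ : Type*} [NormedAddCommGroup H₂] [InnerProductSpace ℂ H₂] [CompleteSpace H₂]
    [Nontrivial H₂]
    (Z₁ : Submodule ℂ (H₁ →L[ℂ] H₁)) (Z₂ : Submodule ℂ (H₂ →L[ℂ] H₂))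
    [FiniteDimensional ℂ Z₁] [FiniteDimensional ℂ Z₂]
    (hstar₁ : ∀ A ∈ Z₁, star A ∈ Z₁) (hstar₂ : ∀ A ∈ Z₂, star A ∈ Z₂)
    (hsq₁ : ∀ A ∈ Z₁, ∃ c : ℂ, A * A = c • (1 : H₁ →L[ℂ] H₁))
    (hsq₂ : ∀ A ∈ Z₂, ∃ c : ℂ, A * A = c • (1 : H₂ →L[ℂ] H₂))
    (hdim₁ : 2 ≤ Module.finrank ℂ Z₁) (hdim₂ : 2 ≤ Module.finrank ℂ Z₂)
    (φ : Z₁ →ₗ[ℂ] Z₂) (hne : φ ≠ 0) (hinj : Function.Injective φ)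
    (hφ : ∀ a b c w : Z₁,
      (w : H₁ →L[ℂ] H₁) =
        (1/2 : ℂ) • ((a : H₁ →L[ℂ] H₁) * star (b : H₁ →L[ℂ] H₁) * (c : H₁ →L[ℂ] H₁) +
          (c : H₁ →L[ℂ] H₁) * star (b : H₁ →L[ℂ] H₁) * (a : H₁ →L[ℂ] H₁)) →
      (φ w : H₂ →L[ℂ] H₂) =
        (1/2 : ℂ) • ((φ a : H₂ →L[ℂ] H₂) * star (φ b : H₂ →L[ℂ] H₂) * (φ c : H₂ →L[ℂ] H₂) +
          (φ c : H₂ →L[ℂ] H₂) * star (φ b : H₂ →L[ℂ] H₂) * (φ a : H₂ →L[ℂ] H₂))) :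
    ∃ μ : ℂ, ‖μ‖ = 1 ∧
      -- `U := μ·φ` preserves the involution: `U(x*) = U(x)*`
      (∀ x y : Z₁, (y : H₁ →L[ℂ] H₁) = star (x : H₁ →L[ℂ] H₁) →
        μ • (φ y : H₂ →L[ℂ] H₂) = star (μ • (φ x : H₂ →L[ℂ] H₂))) ∧
      -- `U := μ·φ` is isometric for the canonical inner products:
      -- if `⟨x,y⟩ = c` in `Z₁` and `⟨U x, U y⟩ = d` in `Z₂`, then `d = c`.
      (∀ x y : Z₁, ∀ c d : ℂ,
        (x : H₁ →L[ℂ] H₁) * star (y : H₁ →L[ℂ] H₁) + star (y : H₁ →L[ℂ] H₁) * (x : H₁ →L[ℂ] H₁)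
            = (2 * c) • (1 : H₁ →L[ℂ] H₁) →
        (μ • (φ x : H₂ →L[ℂ] H₂)) * star (μ • (φ y : H₂ →L[ℂ] H₂)) +
            star (μ • (φ y : H₂ →L[ℂ] H₂)) * (μ • (φ x : H₂ →L[ℂ] H₂))
            = (2 * d) • (1 : H₂ →L[ℂ] H₂) →
        d = c) :=
  spin_factor_morphism_standard_form_general Z₁ Z₂ hstar₁ hstar₂ hsq₁ hsq₂ hdim₁ φ hne hinj hφ
end

section
/- Let A be a C*-algebra and let Z ⊆ A be a closed linear subspace such that (x y* z + z y* x)/2 ∈ Z for all x,y,z ∈ Z. Let z ∈ Z with ‖z‖ < 1 and suppose ‖z z* z − z‖ < ε for some ε with 0 < ε ≤ 1/4. Then there exists e ∈ Z with e e* e = e and ‖e − z‖ < ε^{1/2}. -/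
/-!
Put `a = z⋆z` and `M = ‖zz⋆z - z‖ = ‖z(a - 1)‖`. Since `‖z f(a)‖² = ‖(t f(t)²)(a)‖`, every
`t ∈ σ(a)` satisfies `t(t - 1)² ≤ M²`, and for `M < 1/4` this opens the gap `(M, (1 - √M)²)` in
`σ(a)`. With `g` continuous, zero below the gap and `t ^ (-1/2)` above it, `e = z g(a)` satisfies
`ee⋆e = z (t g(t)³)(a) = e` and `‖e - z‖² = sup_{σ(a)} t(g(t) - 1)² ≤ M < ε`. Finally `e ∈ Z`:
`Z` contains every `z aⁿ` (inductively, `z aⁿ⁺¹ = {z, z, z aⁿ}`), hence, being closed, every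
`z h(a)`.
-/

lemma le_or_le_of_mul_sub_one_sq_le {M t : ℝ} (hM : 0 ≤ M) (ht : t * (t - 1) ^ 2 ≤ M ^ 2) :
    t ≤ M ∨ (1 - √M) ^ 2 ≤ t := by
  by_contra! h
  obtain ⟨hMt, htβ⟩ := h
  have hs : √M ^ 2 = M := Real.sq_sqrt hM
  have hs0 : 0 ≤ √M := Real.sqrt_nonneg M
  have hs1 : √M ≤ 1 := by nlinarith
  have h1t : √M < 1 - t := by nlinarith
  have h1t' : M < (1 - t) ^ 2 := by nlinarith
  nlinarith [mul_lt_mul_of_pos_right hMt (hM.trans_lt h1t'), mul_le_mul_of_nonneg_left h1t'.le hM]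

lemma lt_one_sub_sqrt_sq {M : ℝ} (hM : 0 ≤ M) (hM' : M < 1 / 4) : M < (1 - √M) ^ 2 := by
  have hs : √M ^ 2 = M := Real.sq_sqrt hM
  have : √M < 1 / 2 := by nlinarith [Real.sqrt_nonneg M]
  nlinarith [Real.sqrt_nonneg M]

/-- Vanishes on `(-∞, α]` and equals `t ^ (-1/2)` on `[β, ∞)`. When the spectrum of `z⋆z` misses
`(α, β)`, `z * cfc (invSqrtCutoff α β) (z⋆z)` is the polar part of `z` with the spectrum of `z⋆z`
below `α` discarded. -/
noncomputable def invSqrtCutoff (α β t : ℝ) : ℝ :=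
  max 0 (min 1 ((t - α) / (β - α))) / √(max t β)

section invSqrtCutoff

variable {α β t : ℝ}

lemma continuous_invSqrtCutoff (hβ : 0 < β) : Continuous (invSqrtCutoff α β) := by
  refine .div (by fun_prop) (by fun_prop) fun t => ?_
  exact (Real.sqrt_pos.mpr (hβ.trans_le (le_max_right t β))).ne'

lemma invSqrtCutoff_of_le (hαβ : α < β) (ht : t ≤ α) : invSqrtCutoff α β t = 0 := by
  have : (t - α) / (β - α) ≤ 0 := div_nonpos_of_nonpos_of_nonneg (by linarith) (by linarith)
  simp [invSqrtCutoff, min_le_of_right_le this]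

lemma invSqrtCutoff_of_ge (hαβ : α < β) (ht : β ≤ t) : invSqrtCutoff α β t = (√t)⁻¹ := by
  have : 1 ≤ (t - α) / (β - α) := (one_le_div (by linarith)).mpr (by linarith)
  simp [invSqrtCutoff, max_eq_left ht, this, one_div]

lemma mul_invSqrtCutoff_pow_three (hβ : 0 < β) (hαβ : α < β) (ht : t ≤ α ∨ β ≤ t) :
    t * invSqrtCutoff α β t ^ 3 = invSqrtCutoff α β t := by
  rcases ht with ht | ht
  · simp [invSqrtCutoff_of_le hαβ ht]
  · have hst : 0 < √t := Real.sqrt_pos.mpr (hβ.trans_le ht)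
    have hsq := Real.sq_sqrt (hβ.trans_le ht).le
    rw [invSqrtCutoff_of_ge hαβ ht]
    field_simp
    linear_combination -hsq

lemma mul_invSqrtCutoff_sub_one_sq_le (hβ : 0 < β) (hαβ : α < β) (ht : t ≤ α ∨ β ≤ t)
    (ht1 : t ≤ 1) : t * (invSqrtCutoff α β t - 1) ^ 2 ≤ max α ((1 - √β) ^ 2) := by
  rcases ht with ht | ht
  · simp [invSqrtCutoff_of_le hαβ ht, ht]
  · have hst : 0 < √t := Real.sqrt_pos.mpr (hβ.trans_le ht)
    have hβt : √β ≤ √t := Real.sqrt_le_sqrt ht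
    have ht1' : √t ≤ 1 := Real.sqrt_le_one.mpr ht1
    have : t * ((√t)⁻¹ - 1) ^ 2 = (1 - √t) ^ 2 := by
      have hsq := Real.sq_sqrt (hβ.trans_le ht).le
      field_simp
      linear_combination -(1 - √t) ^ 2 * hsq
    rw [invSqrtCutoff_of_ge hαβ ht, this]
    exact le_max_of_le_right (pow_le_pow_left₀ (by linarith) (by linarith) 2)

end invSqrtCutoff

lemma Submodule.mul_star_mul_self_pow_mem {A : Type*} [Ring A] [StarRing A] [Algebra ℂ A]
    {Z : Submodule ℂ A}
    (hZ : ∀ x ∈ Z, ∀ y ∈ Z, ∀ z ∈ Z, (1/2 : ℂ) • (x * star y * z + z * star y * x) ∈ Z)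
    {z : A} (hz : z ∈ Z) (n : ℕ) : z * (star z * z) ^ n ∈ Z := by
  induction n with
  | zero => simpa using hz
  | succ n ih =>
    have h := hZ z hz z hz _ ih
    have h₁ : z * star z * (z * (star z * z) ^ n) = z * (star z * z) ^ (n + 1) := by
      simp only [pow_succ', mul_assoc]
    have h₂ : z * (star z * z) ^ n * star z * z = z * (star z * z) ^ (n + 1) := by
      simp only [pow_succ, mul_assoc]
    rwa [h₁, h₂, ← two_smul ℂ, smul_smul, one_div, inv_mul_cancel₀ two_ne_zero, one_smul] at h

section CStarAlgebra

variable {A : Type*} [CStarAlgebra A]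

lemma Submodule.mul_cfc_mem_of_forall_mul_pow_mem {Z : Submodule ℂ A}
    (hZ : IsClosed (Z : Set A)) {a : A} (ha : IsSelfAdjoint a) {x : A}
    (hx : ∀ n : ℕ, x * a ^ n ∈ Z) (f : ℝ → ℝ) : x * cfc f a ∈ Z := by
  let W : Submodule ℝ A := (Z.restrictScalars ℝ).comap (LinearMap.mulLeft ℝ x)
  have hW : IsClosed (W : Set A) := hZ.preimage (continuous_const_mul x)
  have hadjoin : Subalgebra.toSubmodule (StarAlgebra.adjoin ℝ {a}).toSubalgebra ≤ W := by
    rw [StarAlgebra.adjoin_eq_span, Set.star_singleton, ha.star_eq, Set.union_self,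
      Submonoid.closure_singleton_eq, Submodule.span_le]
    rintro _ ⟨n, rfl⟩
    exact hx n
  exact closure_minimal hadjoin hW (cfc_mem_elemental f a)

lemma sq_norm_mul_cfc_star_mul_self (x : A) (f : ℝ → ℝ)
    (hf : ContinuousOn f (spectrum ℝ (star x * x)) := by cfc_cont_tac) :
    ‖x * cfc f (star x * x)‖ ^ 2 = ‖cfc (fun t => t * f t ^ 2) (star x * x)‖ := by
  set a := star x * x
  have hstar : star (x * cfc f a) * (x * cfc f a) = cfc (fun t => t * f t ^ 2) a := by
    have hcfc : cfc (fun t => t * f t ^ 2) a = cfc f a * (a * cfc f a) := by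
      rw [cfc_congr (g := fun t => f t * (t * f t)) fun t _ => by ring, cfc_mul f _ a,
        cfc_mul (fun t => t) f a, cfc_id' ℝ a]
    rw [star_mul, (IsSelfAdjoint.cfc (f := f) (a := a)).star_eq, mul_assoc, ← mul_assoc (star x),
      hcfc]
  rw [sq, ← CStarRing.norm_star_mul_self, hstar]

lemma apply_le_sq_norm_mul_cfc_star_mul_self (x : A) (f : ℝ → ℝ) {t : ℝ}
    (ht : t ∈ spectrum ℝ (star x * x))
    (hf : ContinuousOn f (spectrum ℝ (star x * x)) := by cfc_cont_tac) :
    t * f t ^ 2 ≤ ‖x * cfc f (star x * x)‖ ^ 2 := by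
  rw [sq_norm_mul_cfc_star_mul_self x f]
  exact (le_abs_self _).trans (norm_apply_le_norm_cfc (fun t => t * f t ^ 2) _ ht)

lemma sq_norm_mul_cfc_star_mul_self_le (x : A) (f : ℝ → ℝ) {c : ℝ} (hc : 0 ≤ c)
    (h : ∀ t ∈ spectrum ℝ (star x * x), t * f t ^ 2 ≤ c)
    (hf : ContinuousOn f (spectrum ℝ (star x * x)) := by cfc_cont_tac) :
    ‖x * cfc f (star x * x)‖ ^ 2 ≤ c := by
  rw [sq_norm_mul_cfc_star_mul_self x f]
  refine norm_cfc_le hc fun t ht => ?_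
  have ht0 : 0 ≤ t := spectrum_star_mul_self_nonneg t ht
  rw [Real.norm_of_nonneg (by positivity)]
  exact h t ht

lemma mul_cfc_sub_one (x a : A) (f : ℝ → ℝ)
    (hf : ContinuousOn f (spectrum ℝ a) := by cfc_cont_tac) (ha : IsSelfAdjoint a := by cfc_tac) :
    x * cfc (fun t => f t - 1) a = x * cfc f a - x := by
  rw [cfc_sub f (fun _ => 1) a, cfc_const_one ℝ a, mul_sub, mul_one]

lemma mul_sub_one_sq_le_of_mem_spectrum_star_mul_self (x : A) {t : ℝ} (ht : t ∈ spectrum ℝ (star x * x)) :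
    t * (t - 1) ^ 2 ≤ ‖x * star x * x - x‖ ^ 2 := by
  have := apply_le_sq_norm_mul_cfc_star_mul_self x (fun t => t - 1) ht
  rwa [mul_cfc_sub_one x (star x * x) (fun t => t), cfc_id' ℝ (star x * x), ← mul_assoc] at this

lemma le_sq_norm_of_mem_spectrum_star_mul_self (x : A) {t : ℝ}
    (ht : t ∈ spectrum ℝ (star x * x)) : t ≤ ‖x‖ ^ 2 := by
  rw [sq, ← CStarRing.norm_star_mul_self]
  exact (le_abs_self t).trans (IsometricContinuousFunctionalCalculus.norm_spectrum_le _ ht)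

lemma sq_norm_mul_cfc_star_mul_self_sub_le (x : A) (f : ℝ → ℝ) {c : ℝ} (hc : 0 ≤ c)
    (h : ∀ t ∈ spectrum ℝ (star x * x), t * (f t - 1) ^ 2 ≤ c)
    (hf : ContinuousOn f (spectrum ℝ (star x * x)) := by cfc_cont_tac) :
    ‖x * cfc f (star x * x) - x‖ ^ 2 ≤ c := by
  rw [← mul_cfc_sub_one x _ f]
  exact sq_norm_mul_cfc_star_mul_self_le x _ hc h

lemma mul_cfc_star_mul_self_tripotent (x : A) (f : ℝ → ℝ)
    (h : ∀ t ∈ spectrum ℝ (star x * x), t * f t ^ 3 = f t)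
    (hf : ContinuousOn f (spectrum ℝ (star x * x)) := by cfc_cont_tac) :
    x * cfc f (star x * x) * star (x * cfc f (star x * x)) * (x * cfc f (star x * x)) =
      x * cfc f (star x * x) := by
  set a := star x * x
  have hcfc : cfc f a * (cfc f a * (a * cfc f a)) = cfc f a :=
    calc cfc f a * (cfc f a * (a * cfc f a)) = cfc (fun t => f t * (f t * (t * f t))) a := by
          rw [cfc_mul f _ a, cfc_mul f _ a, cfc_mul (fun t => t) f a, cfc_id' ℝ a]
      _ = cfc f a := cfc_congr fun t ht => by linear_combination h t ht
  rw [star_mul, (IsSelfAdjoint.cfc (f := f) (a := a)).star_eq]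
  calc x * cfc f a * (cfc f a * star x) * (x * cfc f a)
      = x * (cfc f a * (cfc f a * (a * cfc f a))) := by simp only [a, mul_assoc]
    _ = x * cfc f a := by rw [hcfc]

end CStarAlgebra

theorem approx_tripotent_general {A : Type*} [NormedRing A] [StarRing A] [CStarRing A]
    [NormedAlgebra ℂ A] [StarModule ℂ A] [CompleteSpace A]
    (Z : Submodule ℂ A) (hZclosed : IsClosed (Z : Set A))
    (hZtriple : ∀ x ∈ Z, ∀ y ∈ Z, ∀ z ∈ Z,
      (1/2 : ℂ) • (x * star y * z + z * star y * x) ∈ Z)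
    (z : A) (hzZ : z ∈ Z) (hznorm : ‖z‖ < 1)
    (ε : ℝ) (hε : ε ≤ 1/4)
    (happrox : ‖z * star z * z - z‖ < ε) :
    ∃ e ∈ Z, e * star e * e = e ∧ ‖e - z‖ < Real.sqrt ε := by
  let _ : CStarAlgebra A := { ‹NormedRing A›, ‹StarRing A›, ‹CStarRing A›, ‹NormedAlgebra ℂ A›,
    ‹StarModule ℂ A›, ‹CompleteSpace A› with }
  set M := ‖z * star z * z - z‖
  set β := (1 - √M) ^ 2
  have hM : 0 ≤ M := norm_nonneg _
  have hMβ : M < β := lt_one_sub_sqrt_sq hM (happrox.trans_le hε)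
  have hβ : 0 < β := hM.trans_lt hMβ
  have hg : Continuous (invSqrtCutoff M β) := continuous_invSqrtCutoff hβ
  have hgap : ∀ t ∈ spectrum ℝ (star z * z), t ≤ M ∨ β ≤ t := fun t ht =>
    le_or_le_of_mul_sub_one_sq_le hM (mul_sub_one_sq_le_of_mem_spectrum_star_mul_self z ht)
  have hle : ∀ t ∈ spectrum ℝ (star z * z), t ≤ 1 := fun t ht =>
    (le_sq_norm_of_mem_spectrum_star_mul_self z ht).trans
      (pow_le_one₀ (norm_nonneg z) hznorm.le)
  refine ⟨z * cfc (invSqrtCutoff M β) (star z * z),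
    Z.mul_cfc_mem_of_forall_mul_pow_mem hZclosed (.star_mul_self z)
      (Z.mul_star_mul_self_pow_mem hZtriple hzZ) _,
    mul_cfc_star_mul_self_tripotent z _ fun t ht => mul_invSqrtCutoff_pow_three hβ hMβ (hgap t ht),
    ?_⟩
  have hβM : max M ((1 - √β) ^ 2) = M := by
    have : √M ≤ 1 := Real.sqrt_le_one.mpr (by linarith)
    rw [Real.sqrt_sq (by linarith), sub_sub_cancel, Real.sq_sqrt hM, max_self]
  have hdist := sq_norm_mul_cfc_star_mul_self_sub_le z (invSqrtCutoff M β) hM fun t ht =>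
    (mul_invSqrtCutoff_sub_one_sq_le hβ hMβ (hgap t ht) (hle t ht)).trans_eq hβM
  calc _ ≤ √M := Real.le_sqrt_of_sq_le hdist
    _ < √ε := Real.sqrt_lt_sqrt hM happrox

/-- in a JC*-subtriple `Z` of a C*-algebra, an element `z` with `‖z‖ < 1`
that is almost tripotent (`‖z z* z − z‖ < ε ≤ 1/4`) is within `√ε` of a tripotent of `Z`. -/
theorem approx_tripotent {A : Type*} [NormedRing A] [StarRing A] [CStarRing A]
    [NormedAlgebra ℂ A] [StarModule ℂ A] [CompleteSpace A]
    (Z : Submodule ℂ A) (hZclosed : IsClosed (Z : Set A))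
    (hZtriple : ∀ x ∈ Z, ∀ y ∈ Z, ∀ z ∈ Z,
      (1/2 : ℂ) • (x * star y * z + z * star y * x) ∈ Z)
    (z : A) (hzZ : z ∈ Z) (hznorm : ‖z‖ < 1)
    (ε : ℝ) (hε0 : 0 < ε) (hε : ε ≤ 1/4)
    (happrox : ‖z * star z * z - z‖ < ε) :
    ∃ e ∈ Z, e * star e * e = e ∧ ‖e - z‖ < Real.sqrt ε :=
  approx_tripotent_general Z hZclosed hZtriple z hzZ hznorm ε hε happrox
end

section
/- Let A be a C*-algebra and let (Z_n) be an increasing sequence of closed linear subspaces of A, each closed under the Jordan triple product (x y* z + z y* x)/2, and let Z be the norm closure of their union. If e ∈ Z satisfies e e* e = e and 0 < ε ≤ 1, then there exist n and f ∈ Z_n with f f* f = f and ‖e − f‖ < ε. -/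
section Aux

open Polynomial

variable {A : Type*} [CStarAlgebra A]

private lemma proj_norm_le_one {p : A} (hsa : IsSelfAdjoint p) (hidem : p * p = p) :
    ‖p‖ ≤ 1 := by
  have h2 : ‖p‖ * ‖p‖ = ‖p‖ := by
    calc ‖p‖ * ‖p‖ = ‖star p * p‖ := (CStarRing.norm_star_mul_self).symm
    _ = ‖p‖ := by rw [hsa.star_eq, hidem]
  nlinarith [norm_nonneg p]

/-- spectrum of a selfadjoint element near a projection is near `{0, 1}`. -/
private lemma spectrum_near {a p : A} (hp : IsSelfAdjoint p) (hidem : p * p = p)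
    {c : ℝ} (hc : 0 < c) (hap : ‖a - p‖ ≤ c) :
    ∀ t ∈ spectrum ℝ a, |t| ≤ 3 * c ∨ |t - 1| ≤ 3 * c := by
  intro t ht
  by_contra hcon
  push_neg at hcon
  obtain ⟨h0, h1⟩ := hcon
  rw [spectrum.mem_iff] at ht
  apply ht
  rw [Algebra.algebraMap_eq_smul_one]
  set u : A := t • (1 : A) with hu
  have habs0 : 0 < |t| := lt_trans (by positivity) h0
  have habs1 : 0 < |t - 1| := lt_trans (by positivity) h1
  have habspos : 0 < |t| * |t - 1| := mul_pos habs0 habs1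
  have habs : |t| * |t - 1| ≠ 0 := ne_of_gt habspos
  have hd : t ^ 2 - t ≠ 0 := by
    intro h
    apply habs
    rw [← abs_mul]
    have : t * (t - 1) = t ^ 2 - t := by ring
    rw [this, h, abs_zero]
  set w : A := (t ^ 2 - t)⁻¹ • (p + u - 1) with hw
  have key : (u - p) * (p + u - 1) = (t ^ 2 - t) • 1 := by
    simp only [hu, sub_mul, mul_sub, mul_add, add_mul, smul_mul_assoc, mul_smul_comm,
      one_mul, mul_one, smul_smul, smul_sub, smul_add, hidem]
    module
  have key' : (p + u - 1) * (u - p) = (t ^ 2 - t) • 1 := by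
    simp only [hu, sub_mul, mul_sub, mul_add, add_mul, smul_mul_assoc, mul_smul_comm,
      one_mul, mul_one, smul_smul, smul_sub, smul_add, hidem]
    module
  have hw1 : (u - p) * w = 1 := by
    rw [hw, mul_smul_comm, key, smul_smul, inv_mul_cancel₀ hd, one_smul]
  have hw2 : w * (u - p) = 1 := by
    rw [hw, smul_mul_assoc, key', smul_smul, inv_mul_cancel₀ hd, one_smul]
  have unit1 : IsUnit (u - p) := ⟨⟨u - p, w, hw1, hw2⟩, rfl⟩
  -- norm of w
  have hone : ‖(1 : A)‖ ≤ 1 :=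
    proj_norm_le_one (by rw [IsSelfAdjoint, star_one]) (one_mul 1)
  have h1p : ‖p - 1‖ ≤ 1 := by
    have hsa : IsSelfAdjoint (1 - p) := by
      rw [IsSelfAdjoint, star_sub, star_one, hp.star_eq]
    have hid : (1 - p) * (1 - p) = 1 - p := by
      simp only [sub_mul, mul_sub, one_mul, mul_one, hidem]; abel
    calc ‖p - 1‖ = ‖1 - p‖ := by rw [← norm_neg]; congr 1; abel
    _ ≤ 1 := proj_norm_le_one hsa hid
  have hwnorm : ‖w‖ ≤ (|t| * |t - 1|)⁻¹ * (1 + |t|) := by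
    have h1 : ‖p + u - 1‖ ≤ 1 + |t| := by
      have : p + u - 1 = (p - 1) + u := by abel
      rw [this]
      calc ‖(p - 1) + u‖ ≤ ‖p - 1‖ + ‖u‖ := norm_add_le _ _
      _ ≤ 1 + |t| := by
          have : ‖u‖ ≤ |t| := by
            rw [hu, norm_smul, Real.norm_eq_abs]
            nlinarith [abs_nonneg t, norm_nonneg (1 : A)]
          linarith
    have habs2 : |t ^ 2 - t| = |t| * |t - 1| := by
      rw [← abs_mul]; congr 1; ring
    calc ‖w‖ = |(t ^ 2 - t)⁻¹| * ‖p + u - 1‖ := by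
          rw [hw, norm_smul, Real.norm_eq_abs]
    _ = (|t| * |t - 1|)⁻¹ * ‖p + u - 1‖ := by rw [abs_inv, habs2]
    _ ≤ (|t| * |t - 1|)⁻¹ * (1 + |t|) := by
          apply mul_le_mul_of_nonneg_left h1
          positivity
  -- smallness
  have hsmall : ‖w * (a - p)‖ < 1 := by
    have h2 : ‖w * (a - p)‖ ≤ (|t| * |t - 1|)⁻¹ * (1 + |t|) * c := by
      calc ‖w * (a - p)‖ ≤ ‖w‖ * ‖a - p‖ := norm_mul_le _ _
      _ ≤ (|t| * |t - 1|)⁻¹ * (1 + |t|) * c := by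
          apply mul_le_mul hwnorm hap (norm_nonneg _)
          positivity
    have hnum : (1 + |t|) * c < |t| * |t - 1| := by
      have htri1 : |t - 1| ≤ |t| + 1 := by
        have := abs_sub_abs_le_abs_sub t (1 : ℝ); have := abs_sub t 1
        calc |t - 1| ≤ |t| + |(1:ℝ)| := abs_sub _ _
        _ = |t| + 1 := by rw [abs_one]
      have htri2 : 1 - |t| ≤ |t - 1| := by
        have := abs_sub_abs_le_abs_sub (1 : ℝ) t
        calc 1 - |t| = |(1:ℝ)| - |t| := by rw [abs_one]
        _ ≤ |1 - t| := abs_sub_abs_le_abs_sub 1 t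
        _ = |t - 1| := abs_sub_comm 1 t
      rcases le_or_gt (1/2 : ℝ) |t| with hs | hs
      · nlinarith [abs_nonneg t, abs_nonneg (t - 1)]
      · have : (1/2 : ℝ) < |t - 1| := by linarith
        nlinarith [abs_nonneg t, abs_nonneg (t - 1)]
    calc ‖w * (a - p)‖ ≤ (|t| * |t - 1|)⁻¹ * (1 + |t|) * c := h2
    _ = (|t| * |t - 1|)⁻¹ * ((1 + |t|) * c) := by ring
    _ < (|t| * |t - 1|)⁻¹ * (|t| * |t - 1|) :=
        mul_lt_mul_of_pos_left hnum (inv_pos.mpr habspos)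
    _ = 1 := inv_mul_cancel₀ habs
  have unit2 : IsUnit (1 - w * (a - p)) := (Units.oneSub _ hsmall).isUnit
  have factor : u - a = (u - p) * (1 - w * (a - p)) := by
    rw [mul_sub, mul_one, ← mul_assoc, hw1, one_mul]
    abel
  rw [factor]
  exact unit1.mul unit2

/-- odd powers stay in a JC*-subtriple. -/
private lemma odd_pow_mem (Z : Submodule ℂ A)
    (hZ : ∀ x ∈ Z, ∀ y ∈ Z, ∀ z ∈ Z, (1/2 : ℂ) • (x * star y * z + z * star y * x) ∈ Z)
    {x : A} (hx : x ∈ Z) : ∀ k : ℕ, x * (star x * x) ^ k ∈ Z := by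
  intro k
  induction k with
  | zero => simpa using hx
  | succ k ih =>
      have h := hZ _ ih _ hx _ hx
      have e1 : x * (star x * x) ^ k * star x * x = x * (star x * x) ^ (k + 1) := by
        rw [pow_succ]
        simp only [mul_assoc]
      have e2 : x * star x * (x * (star x * x) ^ k) = x * (star x * x) ^ (k + 1) := by
        rw [pow_succ']
        simp only [mul_assoc]
      rw [e1, e2, ← two_smul ℂ, smul_smul] at h
      norm_num at h
      exact h

private lemma poly_mem (Z : Submodule ℂ A)
    (hZ : ∀ x ∈ Z, ∀ y ∈ Z, ∀ z ∈ Z, (1/2 : ℂ) • (x * star y * z + z * star y * x) ∈ Z)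
    {x : A} (hx : x ∈ Z) (q : ℝ[X]) : x * (aeval (star x * x) q) ∈ Z := by
  induction q using Polynomial.induction_on' with
  | add q₁ q₂ h₁ h₂ =>
      rw [map_add, mul_add]
      exact Z.add_mem h₁ h₂
  | monomial n r =>
      rw [aeval_monomial, Algebra.algebraMap_eq_smul_one, smul_mul_assoc, one_mul,
        mul_smul_comm]
      exact Z.smul_of_tower_mem r (odd_pow_mem Z hZ hx n)

end Aux

/-- the correcting odd function: `0` near `0`, `t⁻¹ᐟ²` near `1`. -/
private noncomputable def hfun : ℝ → ℝ :=
  fun t => (min 1 (max 0 (2 * t - 1 / 2))) / Real.sqrt (max t (3 / 4))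

private lemma hfun_cont : Continuous hfun := by
  apply Continuous.div
  · exact continuous_const.min ((continuous_const.max (by continuity)))
  · exact Real.continuous_sqrt.comp (continuous_id.max continuous_const)
  · intro t
    have : 0 < Real.sqrt (max t (3 / 4)) :=
      Real.sqrt_pos.mpr (lt_of_lt_of_le (by norm_num) (le_max_right _ _))
    exact ne_of_gt this

private lemma hfun_low {t : ℝ} (ht : t ≤ 1 / 4) : hfun t = 0 := by
  unfold hfun
  have h1 : max 0 (2 * t - 1 / 2) = 0 := max_eq_left (by linarith)
  rw [h1, min_eq_right (by norm_num), zero_div]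

private lemma hfun_high {t : ℝ} (ht : 3 / 4 ≤ t) : hfun t = 1 / Real.sqrt t := by
  unfold hfun
  have h1 : min 1 (max 0 (2 * t - 1 / 2)) = 1 := by
    rw [max_eq_right (by linarith)]
    exact min_eq_left (by linarith)
  rw [h1, max_eq_left ht]

private lemma hfun_tripotent {t : ℝ} (ht : |t| ≤ 1 / 4 ∨ |t - 1| ≤ 1 / 4) :
    hfun t * hfun t * t * hfun t = hfun t := by
  rcases ht with ht | ht
  · rw [hfun_low (le_trans (le_abs_self t) ht)]; ring
  · have ht' : 3 / 4 ≤ t := by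
      have := abs_le.mp ht; linarith [this.1]
    rw [hfun_high ht']
    have hs : Real.sqrt t ≠ 0 := ne_of_gt (Real.sqrt_pos.mpr (by linarith))
    have hss : Real.sqrt t * Real.sqrt t = t := Real.mul_self_sqrt (by linarith)
    field_simp
    try nlinarith [hss]

private lemma hfun_estimate {t K : ℝ} (hK : K ≤ 1 / 4)
    (ht : |t| ≤ K ∨ |t - 1| ≤ K) :
    |(1 - hfun t) * t * (1 - hfun t)| ≤ K := by
  rcases ht with ht | ht
  · have h2 := (abs_le.mp ht).2
    rw [hfun_low (by linarith)]
    simpa using ht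
  · have hK0 : 0 ≤ K := le_trans (abs_nonneg _) ht
    have ht' : 3 / 4 ≤ t := by have := abs_le.mp ht; linarith [this.1]
    rw [hfun_high ht']
    have hs : 0 < Real.sqrt t := Real.sqrt_pos.mpr (by linarith)
    have hss : Real.sqrt t * Real.sqrt t = t := Real.mul_self_sqrt (by linarith)
    have key : (1 - 1 / Real.sqrt t) * t * (1 - 1 / Real.sqrt t)
        = (Real.sqrt t - 1) ^ 2 := by
      field_simp
      nlinarith [hss]
    rw [key, abs_of_nonneg (sq_nonneg _)]
    have hsub : |Real.sqrt t - 1| ≤ |t - 1| := by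
      have h2 : Real.sqrt t - 1 = (t - 1) / (Real.sqrt t + 1) := by
        field_simp
        nlinarith [hss]
      rw [h2, abs_div]
      have hd : 1 ≤ |Real.sqrt t + 1| := by
        rw [abs_of_nonneg (by linarith)]; linarith
      exact div_le_self (abs_nonneg _) hd
    have : |Real.sqrt t - 1| ≤ K := le_trans hsub ht
    calc (Real.sqrt t - 1) ^ 2 = |Real.sqrt t - 1| ^ 2 := (sq_abs _).symm
    _ ≤ K ^ 2 := by nlinarith [abs_nonneg (Real.sqrt t - 1)]
    _ ≤ K := by nlinarith

/-- a tripotent in the closure of the union of an increasing sequence of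
closed JC*-subtriples of a C*-algebra can be approximated by tripotents of the members. -/
theorem approx_tripotent_inductive_limit {A : Type*} [NormedRing A] [StarRing A]
    [CStarRing A] [NormedAlgebra ℂ A] [StarModule ℂ A] [CompleteSpace A]
    (Z : ℕ → Submodule ℂ A) (hmono : Monotone Z)
    (hclosed : ∀ n, IsClosed (Z n : Set A))
    (htriple : ∀ n, ∀ x ∈ Z n, ∀ y ∈ Z n, ∀ z ∈ Z n,
      (1/2 : ℂ) • (x * star y * z + z * star y * x) ∈ Z n)
    (e : A) (he : e ∈ closure (⋃ n, (Z n : Set A)))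
    (htri : e * star e * e = e)
    (ε : ℝ) (hε0 : 0 < ε) (hε : ε ≤ 1) :
    ∃ n : ℕ, ∃ f ∈ Z n, f * star f * f = f ∧ ‖e - f‖ < ε := by
  letI : CStarAlgebra A := { }
  -- the projection `p = e* e`
  set p : A := star e * e with hp
  have hpidem : p * p = p := by
    rw [hp]
    calc star e * e * (star e * e) = star e * (e * star e * e) := by
          simp only [mul_assoc]
    _ = star e * e := by rw [htri]
  have hpsa : IsSelfAdjoint p := IsSelfAdjoint.star_mul_self e
  have hpnorm : ‖p‖ ≤ 1 := proj_norm_le_one hpsa hpidem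
  have henorm : ‖e‖ ≤ 1 := by
    have h1 : ‖e‖ * ‖e‖ = ‖p‖ := (CStarRing.norm_star_mul_self).symm
    nlinarith [norm_nonneg e]
  -- choose an approximant x in some Z n
  set δ : ℝ := ε ^ 2 / 64 with hδ
  have hδ0 : 0 < δ := by positivity
  have hδ1 : δ ≤ 1 / 64 := by rw [hδ]; nlinarith
  obtain ⟨x, hxmem, hxe⟩ : ∃ x ∈ ⋃ n, (Z n : Set A), ‖e - x‖ < δ := by
    rw [Metric.mem_closure_iff] at he
    obtain ⟨x, hx1, hx2⟩ := he δ hδ0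
    exact ⟨x, hx1, by rwa [← dist_eq_norm]⟩
  obtain ⟨n, hxZ⟩ := Set.mem_iUnion.mp hxmem
  -- the selfadjoint element a = x* x and its spectrum
  set a : A := star x * x with ha
  have hasa : IsSelfAdjoint a := IsSelfAdjoint.star_mul_self x
  have hxnorm : ‖x‖ ≤ 1 + δ := by
    calc ‖x‖ = ‖e - (e - x)‖ := by congr 1; abel
    _ ≤ ‖e‖ + ‖e - x‖ := norm_sub_le _ _
    _ ≤ 1 + δ := by linarith [le_of_lt hxe]
  set c₀ : ℝ := δ * (2 + δ) with hc₀
  have hc₀0 : 0 < c₀ := by positivity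
  have hap : ‖a - p‖ ≤ c₀ := by
    have hsplit : a - p = star x * (x - e) + star (x - e) * e := by
      rw [ha, hp, star_sub]
      noncomm_ring
    rw [hsplit]
    have h1 : ‖star x * (x - e)‖ ≤ (1 + δ) * δ := by
      calc ‖star x * (x - e)‖ ≤ ‖star x‖ * ‖x - e‖ := norm_mul_le _ _
      _ ≤ (1 + δ) * δ := by
          rw [norm_star, ← norm_neg (x - e), neg_sub]
          exact mul_le_mul hxnorm (le_of_lt hxe) (norm_nonneg _) (by linarith)
    have h2 : ‖star (x - e) * e‖ ≤ δ * 1 := by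
      calc ‖star (x - e) * e‖ ≤ ‖star (x - e)‖ * ‖e‖ := norm_mul_le _ _
      _ ≤ δ * 1 := by
          rw [norm_star, ← norm_neg (x - e), neg_sub]
          exact mul_le_mul (le_of_lt hxe) henorm (norm_nonneg _) (by linarith)
    calc ‖star x * (x - e) + star (x - e) * e‖
        ≤ ‖star x * (x - e)‖ + ‖star (x - e) * e‖ := norm_add_le _ _
    _ ≤ (1 + δ) * δ + δ * 1 := by linarith
    _ = c₀ := by rw [hc₀]; ring
  set K : ℝ := 3 * c₀ with hK
  have hK0 : 0 ≤ K := by positivity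
  have hK4 : K ≤ 1 / 4 := by
    rw [hK, hc₀]
    nlinarith
  have hspec : ∀ t ∈ spectrum ℝ a, |t| ≤ K ∨ |t - 1| ≤ K :=
    spectrum_near hpsa hpidem hc₀0 hap
  -- the tripotent f
  set c : A := cfc hfun a with hc
  have hcsa : IsSelfAdjoint c := cfc_predicate hfun a
  set f : A := x * c with hf
  -- tripotency
  have hcc : cfc (fun t => hfun t * hfun t * t * hfun t) a = c * c * a * c := by
    rw [cfc_mul (fun t => hfun t * hfun t * t) hfun a
        ((hfun_cont.mul hfun_cont).mul continuous_id).continuousOn hfun_cont.continuousOn,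
      cfc_mul (fun t => hfun t * hfun t) (fun t => t) a
        (hfun_cont.mul hfun_cont).continuousOn continuous_id.continuousOn,
      cfc_mul hfun hfun a hfun_cont.continuousOn hfun_cont.continuousOn,
      cfc_id' ℝ a hasa, hc]
  have hftri : f * star f * f = f := by
    have hstarf : star f = c * star x := by
      rw [hf, star_mul, hcsa.star_eq]
    rw [hf, hstarf]
    have assoc1 : x * c * (c * star x) * (x * c) = x * (c * c * a * c) := by
      rw [ha]; simp only [mul_assoc]
    rw [assoc1, ← hcc, cfc_congr (fun t ht => hfun_tripotent
      ((hspec t ht).imp (fun h => le_trans h hK4) (fun h => le_trans h hK4)))]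
  -- membership
  have hmem : f ∈ Z n := by
    have hclose : f ∈ closure ((Z n : Set A)) := by
      rw [Metric.mem_closure_iff]
      intro η hη
      have hx1 : (0:ℝ) < ‖x‖ + 1 := by positivity
      set M : ℝ := ‖a‖ * ‖(1:A)‖ with hM
      obtain ⟨q, hq⟩ := exists_polynomial_near_of_continuousOn (-M - 1) (M + 1) hfun
        hfun_cont.continuousOn (η / (‖x‖ + 1)) (by positivity)
      refine ⟨x * Polynomial.aeval a q, poly_mem (Z n) (htriple n) hxZ q, ?_⟩
      have hspec_icc : ∀ t ∈ spectrum ℝ a, t ∈ Set.Icc (-M - 1) (M + 1) := by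
        intro t ht
        have := spectrum.norm_le_norm_mul_of_mem ht
        rw [Real.norm_eq_abs] at this
        have := abs_le.mp this
        constructor <;> [linarith [this.1]; linarith [this.2]]
      have hqa : ‖c - Polynomial.aeval a q‖ ≤ η / (‖x‖ + 1) := by
        rw [hc, ← cfc_polynomial q a hasa, ← cfc_sub hfun q.eval a
          (hfun_cont.continuousOn) (Polynomial.continuous _).continuousOn]
        apply norm_cfc_le (by positivity)
        intro t ht
        rw [Real.norm_eq_abs, abs_sub_comm]
        exact le_of_lt (hq t (hspec_icc t ht))
      rw [dist_eq_norm]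
      calc ‖f - x * Polynomial.aeval a q‖ = ‖x * (c - Polynomial.aeval a q)‖ := by
            rw [hf, mul_sub]
      _ ≤ ‖x‖ * ‖c - Polynomial.aeval a q‖ := norm_mul_le _ _
      _ ≤ ‖x‖ * (η / (‖x‖ + 1)) := by
          exact mul_le_mul_of_nonneg_left hqa (norm_nonneg _)
      _ < η := by
          rw [mul_div_assoc']
          rw [div_lt_iff₀ hx1]
          nlinarith [norm_nonneg x]
    rwa [(hclosed n).closure_eq] at hclose
  -- the estimate
  have hxf : ‖x - f‖ * ‖x - f‖ ≤ K := by
    have hxf1 : x - f = x * (1 - c) := by rw [hf, mul_sub, mul_one]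
    have hstar1c : star (1 - c) = 1 - c := by rw [star_sub, star_one, hcsa.star_eq]
    have hprod : star (x - f) * (x - f) = (1 - c) * a * (1 - c) := by
      rw [hxf1, star_mul, hstar1c, ha]
      simp only [mul_assoc]
    have h1c : cfc (fun t => 1 - hfun t) a = (1 : A) - c := by
      rw [cfc_sub (fun _ => (1:ℝ)) hfun a continuousOn_const hfun_cont.continuousOn,
        cfc_const_one ℝ a hasa, hc]
    have hbig : cfc (fun t => (1 - hfun t) * t * (1 - hfun t)) a
        = (1 - c) * a * (1 - c) := by
      rw [cfc_mul (fun t => (1 - hfun t) * t) (fun t => 1 - hfun t) a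
          (((continuous_const.sub hfun_cont).mul continuous_id).continuousOn)
          ((continuous_const.sub hfun_cont).continuousOn),
        cfc_mul (fun t => 1 - hfun t) (fun t => t) a
          ((continuous_const.sub hfun_cont).continuousOn) continuous_id.continuousOn,
        cfc_id' ℝ a hasa, h1c]
    calc ‖x - f‖ * ‖x - f‖ = ‖star (x - f) * (x - f)‖ :=
          (CStarRing.norm_star_mul_self).symm
    _ = ‖cfc (fun t => (1 - hfun t) * t * (1 - hfun t)) a‖ := by rw [hprod, ← hbig]
    _ ≤ K := by
        apply norm_cfc_le hK0
        intro t ht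
        rw [Real.norm_eq_abs]
        exact hfun_estimate hK4 (hspec t ht)
  have hxfK : ‖x - f‖ ≤ Real.sqrt K := by
    nlinarith [Real.sqrt_nonneg K, Real.sq_sqrt hK0, norm_nonneg (x - f)]
  have hKest : Real.sqrt K ≤ 3 * ε / 8 := by
    have h1 : K ≤ (3 * ε / 8) ^ 2 := by
      rw [hK, hc₀, hδ]
      nlinarith
    calc Real.sqrt K ≤ Real.sqrt ((3 * ε / 8) ^ 2) := Real.sqrt_le_sqrt h1
    _ = 3 * ε / 8 := Real.sqrt_sq (by positivity)
  refine ⟨n, f, hmem, hftri, ?_⟩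
  calc ‖e - f‖ = ‖(e - x) + (x - f)‖ := by congr 1; abel
  _ ≤ ‖e - x‖ + ‖x - f‖ := norm_add_le _ _
  _ < δ + 3 * ε / 8 := by
      have := le_trans hxfK hKest
      linarith
  _ < ε := by rw [hδ]; nlinarith
end

section
/- Let H be a nonzero complex Hilbert space and let Z ⊆ B(H) be a complex linear subspace of the bounded operators on H which is closed under the adjoint A ↦ A* and satisfies that A² is a scalar multiple of the identity operator for every A ∈ Z. Then for all A, B ∈ Z there is a unique complex number ⟨A,B⟩ with A B* + B* A = 2⟨A,B⟩·id_H, and the map (A,B) ↦ ⟨A,B⟩ is a positive-definite hermitian inner product on Z: it is linear in A, satisfies ⟨B,A⟩ = conj(⟨A,B⟩), and ⟨A,A⟩ > 0 for every nonzero A ∈ Z. -/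
open scoped ComplexOrder

/-!
The scalar `⟨A,B⟩` exists by polarization: `A B* + B* A = (A + B*)² - A² - (B*)²`, and each
square on the right is scalar because `Z` is star-closed. It is unique since `c ↦ c • 1` is
injective on a nontrivial algebra, and uniqueness yields linearity in `A` as well as hermitian
symmetry (apply `star` to the defining identity). Positivity holds in any C⋆-algebra:
`A A* + A* A ≥ 0` and the spectrum of `(2c) • 1` is `{2c}`, so `c ≥ 0`; if `c = 0`, then
`A* A = -(A A*) ≤ 0`, hence `A* A = 0` and `A = 0`.
-/

section Algebra

variable {K A : Type*} [Field K] [Ring A] [Algebra K A]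

theorem smul_one_injective [Nontrivial A] : Function.Injective fun c : K => c • (1 : A) :=
  fun c d h =>
    (algebraMap K A).injective (by simpa only [Algebra.algebraMap_eq_smul_one] using h)

theorem exists_mul_add_mul_eq_two_mul_smul_one [NeZero (2 : K)] {a b : A} {p q r : K}
    (ha : a * a = p • 1) (hb : b * b = q • 1) (hab : (a + b) * (a + b) = r • 1) :
    ∃ c : K, a * b + b * a = (2 * c) • 1 :=
  ⟨(r - p - q) / 2, by
    rw [mul_div_cancel₀ _ two_ne_zero, sub_smul, sub_smul, ← hab, ← ha, ← hb]; noncomm_ring⟩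

end Algebra

section StarAlgebra

variable {K A : Type*} [Field K] [Ring A] [StarRing A] [Algebra K A]

def IsSpinInner (a b : A) (c : K) : Prop :=
  a * star b + star b * a = (2 * c) • (1 : A)

theorem Submodule.exists_isSpinInner [NeZero (2 : K)] (Z : Submodule K A)
    (hstar : ∀ a ∈ Z, star a ∈ Z) (hsq : ∀ a ∈ Z, ∃ c : K, a * a = c • 1) {a b : A}
    (ha : a ∈ Z) (hb : b ∈ Z) : ∃ c : K, IsSpinInner a b c := by
  obtain ⟨p, hp⟩ := hsq a ha
  obtain ⟨q, hq⟩ := hsq (star b) (hstar b hb)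
  obtain ⟨r, hr⟩ := hsq (a + star b) (Z.add_mem ha (hstar b hb))
  exact exists_mul_add_mul_eq_two_mul_smul_one hp hq hr

namespace IsSpinInner

variable {a a' b : A} {c c' : K}

theorem unique [Nontrivial A] [NeZero (2 : K)] (h : IsSpinInner a b c)
    (h' : IsSpinInner a b c') : c = c' :=
  mul_left_cancel₀ two_ne_zero (smul_one_injective (h.symm.trans h'))

theorem add (h : IsSpinInner a b c) (h' : IsSpinInner a' b c') :
    IsSpinInner (a + a') b (c + c') := by
  rw [IsSpinInner, mul_add 2, add_smul, ← h, ← h']; noncomm_ring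

theorem smul (h : IsSpinInner a b c) (k : K) : IsSpinInner (k • a) b (k * c) := by
  rw [IsSpinInner, smul_mul_assoc, mul_smul_comm, ← smul_add, h, smul_smul, mul_left_comm]

theorem swap [StarRing K] [StarModule K A] (h : IsSpinInner a b c) : IsSpinInner b a (star c) := by
  have := congrArg star h
  simp only [star_add, star_mul, star_star, star_smul, star_one] at this
  rw [IsSpinInner, this, star_ofNat, mul_comm]

end IsSpinInner

end StarAlgebra

theorem IsSpinInner.pos {A : Type*} [CStarAlgebra A] [PartialOrder A] [StarOrderedRing A]
    [Nontrivial A] {a : A} {c : ℂ} (h : IsSpinInner a a c) (ha : a ≠ 0) : 0 < c := by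
  have hsum : 0 ≤ a * star a + star a * a :=
    add_nonneg (mul_star_self_nonneg a) (star_mul_self_nonneg a)
  have h2c : 0 ≤ 2 * c := by
    refine spectrum_nonneg_of_nonneg (h ▸ hsum) ?_
    rw [← Algebra.algebraMap_eq_smul_one, spectrum.scalar_eq]
    rfl
  have hc : 0 ≤ c := le_of_mul_le_mul_left (by rwa [mul_zero]) two_pos
  refine hc.lt_of_ne fun hc0 => ha ?_
  have : star a * a ≤ 0 := by
    rw [IsSpinInner, ← hc0, mul_zero, zero_smul, add_eq_zero_iff_neg_eq] at h
    exact h ▸ neg_nonpos.mpr (mul_star_self_nonneg a)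
  exact (CStarRing.star_mul_self_eq_zero_iff a).mp (le_antisymm this (star_mul_self_nonneg a))

/-- on a star-closed subspace `Z ⊆ B(H)` all of whose elements have
scalar squares, the relation `A B* + B* A = 2⟨A,B⟩·id` determines a unique scalar
`⟨A,B⟩` for all `A, B ∈ Z`, and `(A,B) ↦ ⟨A,B⟩` is a positive-definite hermitian
inner product on `Z`. -/
theorem spin_factor_canonical_inner_product
    {H : Type*} [NormedAddCommGroup H] [InnerProductSpace ℂ H] [CompleteSpace H]
    [Nontrivial H]
    (Z : Submodule ℂ (H →L[ℂ] H))
    (hstar : ∀ A ∈ Z, star A ∈ Z)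
    (hsq : ∀ A ∈ Z, ∃ c : ℂ, A * A = c • (1 : H →L[ℂ] H)) :
    ∃ inn : Z → Z → ℂ,
      (∀ A B : Z,
        (A : H →L[ℂ] H) * star (B : H →L[ℂ] H) + star (B : H →L[ℂ] H) * (A : H →L[ℂ] H)
          = (2 * inn A B) • (1 : H →L[ℂ] H)) ∧
      (∀ (A B : Z) (c : ℂ),
        (A : H →L[ℂ] H) * star (B : H →L[ℂ] H) + star (B : H →L[ℂ] H) * (A : H →L[ℂ] H)
          = (2 * c) • (1 : H →L[ℂ] H) → c = inn A B) ∧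
      (∀ B : Z, IsLinearMap ℂ fun A : Z => inn A B) ∧
      (∀ A B : Z, inn B A = starRingEnd ℂ (inn A B)) ∧
      (∀ A : Z, A ≠ 0 → 0 < inn A A) := by
  choose inn hinn using fun A B : Z => Z.exists_isSpinInner hstar hsq A.2 B.2
  refine ⟨inn, hinn, fun A B c h => IsSpinInner.unique h (hinn A B), fun B => ⟨?_, ?_⟩,
    fun A B => (hinn B A).unique (hinn A B).swap, fun A hA => (hinn A A).pos ?_⟩
  · exact fun A A' => (hinn (A + A') B).unique ((hinn A B).add (hinn A' B))
  · exact fun k A => (hinn (k • A) B).unique ((hinn A B).smul k)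
  · exact_mod_cast hA
end
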